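/- arXiv:1909.00937 — 10 statements merged into one kernel-verified Lean document; each statement's English description precedes it below -/
import Mathlib

section
/- Fix a bijection π: ω×ω → ω and define B* ⊆ 2^ω × 2^ω by (x,y) ∈ B* iff x = y, or there exists k such that for all n, x(n) = y(π(n,k)), or there exists k such that for all n, y(n) = x(π(n,k)). Then there is no perfect set P ⊆ 2^ω with P × P ⊆ B*. -/
/-- The relation `B* ⊆ 2^ω × 2^ω` determined by a bijection `π : ω × ω → ω`. -/
def BStar (π : ℕ × ℕ ≃ ℕ) (x y : ℕ → Bool) : Prop :=
  x = y ∨ (∃ k : ℕ, ∀ n : ℕ, x n = y (π (n, k))) ∨ (∃ k : ℕ, ∀ n : ℕ, y n = x (π (n, k)))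

private lemma isolated_contra {P : Set (ℕ → Bool)} (hP : Perfect P) {x : ℕ → Bool}
    (hx : x ∈ P) {N : Set (ℕ → Bool)} (hN : N ∈ nhds x)
    (h : ∀ z, z ∈ N → z ∈ P → z = x) : False := by
  have hacc := hP.acc x hx
  rw [accPt_iff_nhds] at hacc
  obtain ⟨y, ⟨hyN, hyP⟩, hne⟩ := hacc N hN
  exact hne (h y hyN hyP)

/-- There is no perfect set `P ⊆ 2^ω` with `P × P ⊆ B*`. -/
theorem stmt_1 (π : ℕ × ℕ ≃ ℕ) :
    ¬ ∃ P : Set (ℕ → Bool), Perfect P ∧ P.Nonempty ∧ ∀ x ∈ P, ∀ y ∈ P, BStar π x y := by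
  rintro ⟨P, hPerf, ⟨x₀, hx₀⟩, hB⟩
  set T : Set ((ℕ → Bool) × (ℕ → Bool)) := P ×ˢ P with hT
  have hTclosed : IsClosed T := hPerf.closed.prod hPerf.closed
  haveI : CompactSpace T := isCompact_iff_compactSpace.mp hTclosed.isCompact
  haveI : Nonempty T := ⟨⟨(x₀, x₀), ⟨hx₀, hx₀⟩⟩⟩
  haveI : LocallyCompactSpace T := inferInstance
  haveI : BaireSpace T := inferInstance
  let g : ℕ ⊕ ℕ ⊕ Unit → Set T := fun i =>
    match i with
    | Sum.inl k => {p : T | ∀ n, (p : (ℕ → Bool) × (ℕ → Bool)).1 n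
        = (p : (ℕ → Bool) × (ℕ → Bool)).2 (π (n, k))}
    | Sum.inr (Sum.inl k) => {p : T | ∀ n, (p : (ℕ → Bool) × (ℕ → Bool)).2 n
        = (p : (ℕ → Bool) × (ℕ → Bool)).1 (π (n, k))}
    | Sum.inr (Sum.inr _) => {p : T | (p : (ℕ → Bool) × (ℕ → Bool)).1
        = (p : (ℕ → Bool) × (ℕ → Bool)).2}
  have hclosed : ∀ i, IsClosed (g i) := by
    rintro (k | k | _)
    · rw [show g (Sum.inl k) = ⋂ n, {p : T | (p : (ℕ → Bool) × (ℕ → Bool)).1 n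
          = (p : (ℕ → Bool) × (ℕ → Bool)).2 (π (n, k))} by ext p; simp [g]]
      exact isClosed_iInter fun n => isClosed_eq
        ((continuous_apply n).comp (continuous_fst.comp continuous_subtype_val))
        ((continuous_apply (π (n, k))).comp (continuous_snd.comp continuous_subtype_val))
    · rw [show g (Sum.inr (Sum.inl k)) = ⋂ n, {p : T | (p : (ℕ → Bool) × (ℕ → Bool)).2 n
          = (p : (ℕ → Bool) × (ℕ → Bool)).1 (π (n, k))} by ext p; simp [g]]
      exact isClosed_iInter fun n => isClosed_eq
        ((continuous_apply n).comp (continuous_snd.comp continuous_subtype_val))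
        ((continuous_apply (π (n, k))).comp (continuous_fst.comp continuous_subtype_val))
    · exact isClosed_eq (continuous_fst.comp continuous_subtype_val)
        (continuous_snd.comp continuous_subtype_val)
  have hcover : (⋃ i, g i) = Set.univ := by
    ext p
    simp only [Set.mem_iUnion, Set.mem_univ, iff_true]
    rcases hB p.val.1 p.2.1 p.val.2 p.2.2 with h | ⟨k, hk⟩ | ⟨k, hk⟩
    · exact ⟨Sum.inr (Sum.inr ()), h⟩
    · exact ⟨Sum.inl k, hk⟩
    · exact ⟨Sum.inr (Sum.inl k), hk⟩
  obtain ⟨i, p, hp⟩ := nonempty_interior_of_iUnion_of_closed hclosed hcover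
  have hpg : p ∈ g i := interior_subset hp
  rw [mem_interior_iff_mem_nhds, mem_nhds_subtype] at hp
  obtain ⟨W, hW, hWsub⟩ := hp
  rw [mem_nhds_prod_iff] at hW
  obtain ⟨U, hU, V, hV, hUV⟩ := hW
  have hyV : p.val.2 ∈ V := mem_of_mem_nhds hV
  have hxU : p.val.1 ∈ U := mem_of_mem_nhds hU
  rcases i with k | k | _
  · -- for z ∈ U ∩ P, z is determined: equals p.val.1
    have key : ∀ z, z ∈ U → z ∈ P → ∀ n, z n = p.val.2 (π (n, k)) := by
      intro z hzU hzP
      have : (⟨(z, p.val.2), ⟨hzP, p.2.2⟩⟩ : T) ∈ g (Sum.inl k) :=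
        hWsub (hUV ⟨hzU, hyV⟩)
      exact this
    have h1 : ∀ z, z ∈ U → z ∈ P → z = p.val.1 := by
      intro z hzU hzP
      funext n
      rw [key z hzU hzP n, key p.val.1 hxU p.2.1 n]
    exact isolated_contra hPerf p.2.1 hU h1
  · have key : ∀ z, z ∈ V → z ∈ P → ∀ n, z n = p.val.1 (π (n, k)) := by
      intro z hzV hzP
      have : (⟨(p.val.1, z), ⟨p.2.1, hzP⟩⟩ : T) ∈ g (Sum.inr (Sum.inl k)) :=
        hWsub (hUV ⟨hxU, hzV⟩)
      exact this
    have h1 : ∀ z, z ∈ V → z ∈ P → z = p.val.2 := by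
      intro z hzV hzP
      funext n
      rw [key z hzV hzP n, key p.val.2 hyV p.2.2 n]
    exact isolated_contra hPerf p.2.2 hV h1
  · have key : ∀ z, z ∈ U → z ∈ P → z = p.val.2 := by
      intro z hzU hzP
      have : (⟨(z, p.val.2), ⟨hzP, p.2.2⟩⟩ : T) ∈ g (Sum.inr (Sum.inr ())) :=
        hWsub (hUV ⟨hzU, hyV⟩)
      exact this
    have heq : p.val.1 = p.val.2 := hpg
    rw [heq] at hU
    exact isolated_contra hPerf p.2.2 hU key
end

section
/- Let B ⊆ 2^ω, let + denote coordinatewise addition mod 2 on 2^ω, and let x, y ∈ 2^ω with x ≠ y. If the intersection (B+x) ∩ (B+y) is finite, then its cardinality is even. -/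
/-!
If `b + x = b' + y` then `b + y = b' + x` because `2 • (y - x) = 0`, so translation by `y - x`
maps `(B + x) ∩ (B + y)` to itself; it is an involution without fixed points, hence pairs up the
elements of the intersection.
-/

open Set

theorem Set.even_ncard_of_involution {α : Type*} {S : Set α} {f : α → α}
    (hmaps : MapsTo f S S) (hinv : LeftInvOn f f S) (hfree : ∀ z ∈ S, f z ≠ z) :
    Even S.ncard := by
  classical
  obtain hfin | hinf := S.finite_or_infinite
  · have := hfin.fintype
    have hinvol : Function.Involutive hmaps.restrict := fun z => Subtype.ext (hinv z.2)
    let σ : Equiv.Perm S := hinvol.toPerm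
    have hσ : σ ^ 2 = 1 := Equiv.ext hinvol
    have hsupp : σ.support = Finset.univ :=
      Finset.eq_univ_of_forall fun z => Equiv.Perm.mem_support.2 fun hz =>
        hfree z z.2 (congrArg Subtype.val hz)
    rw [even_iff_two_dvd, ← Nat.card_coe_set_eq, Nat.card_eq_fintype_card, ← Finset.card_univ,
      ← hsupp]
    exact Equiv.Perm.two_dvd_card_support hσ
  · rw [hinf.ncard]
    exact .zero

theorem even_ncard_image_add_inter_image_add {G : Type*} [AddCommGroup G] (B : Set G) {x y : G}
    (hxy : x ≠ y) (h2 : 2 • (y - x) = 0) :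
    Even (((· + x) '' B) ∩ ((· + y) '' B)).ncard := by
  refine Set.even_ncard_of_involution (f := (· + (y - x))) ?_ ?_ ?_
  · rintro _ ⟨⟨b, hb, rfl⟩, b', hb', hb'eq⟩
    exact ⟨⟨b', hb', by linear_combination (norm := module) hb'eq - h2⟩, b, hb,
      (add_add_sub_cancel b y x).symm⟩
  · intro z _
    simp only [add_assoc, ← two_nsmul, h2, add_zero]
  · intro z _ h
    exact hxy (sub_eq_zero.1 (add_eq_left.1 h)).symm

theorem stmt_2_general (B : Set (ℕ → ZMod 2)) (x y : ℕ → ZMod 2) (hxy : x ≠ y) :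
    Even ((((fun b => b + x) '' B) ∩ ((fun b => b + y) '' B)).ncard) :=
  even_ncard_image_add_inter_image_add B hxy (by rw [two_nsmul, CharTwo.add_self_eq_zero])

/-- If `x ≠ y` in the Cantor group `2^ω` (coordinatewise addition mod 2) and
`(B+x) ∩ (B+y)` is finite, then its cardinality is even. -/
theorem stmt_2 (B : Set (ℕ → ZMod 2)) (x y : ℕ → ZMod 2) (hxy : x ≠ y)
    (hfin : (((fun b => b + x) '' B) ∩ ((fun b => b + y) '' B)).Finite) :
    Even ((((fun b => b + x) '' B) ∩ ((fun b => b + y) '' B)).ncard) :=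
  stmt_2_general B x y hxy
end

section
/- Let 0 < ℓ < ω and let ℬ ⊆ 2^ℓ be a linearly independent set of vectors in the vector space (𝔽₂)^ℓ over 𝔽₂. If 𝒜 ⊆ 2^ℓ has |𝒜| ≥ 5 and 𝒜 + 𝒜 ⊆ ℬ + ℬ, then there is a unique x ∈ 2^ℓ such that 𝒜 + x ⊆ ℬ. -/
/-!
Fix `a₀ ∈ A`. Each `a ≠ a₀` in `A` gives `a₀ + a = b + b'` with `b ≠ b'` in `B`, i.e. an edge
`{b, b'}` on `B`, and by linear independence distinct `a` give distinct edges. For two such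
`a, a'`, the sum `a + a'` is the sum of the two edges and lies in `B + B`; linear independence
forbids the edges to be disjoint. At least four pairwise intersecting edges form a star, with
centre `c` say, and then `x = a₀ + c` works. Uniqueness: if `x ≠ y` both work, every `a ∈ A`
gives the representation `x + y = (a + x) + (a + y)`, which is unique, so `|A| ≤ 2`.
-/

open scoped Pointwise

theorem LinearIndepOn.injOn_finset_sum {R V : Type*} [Ring R] [Nontrivial R] [AddCommGroup V]
    [Module R V] {B : Set V} (hB : LinearIndepOn R id B) :
    Set.InjOn (fun s : Finset V => ∑ v ∈ s, v) {s | ↑s ⊆ B} := by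
  classical
  intro s hs t ht hst
  have hcoeff := linearIndepOn_iff'.mp hB (s ∪ t)
    (fun v => (if v ∈ s then 1 else 0) - if v ∈ t then 1 else 0)
    (Finset.coe_union s t ▸ Set.union_subset hs ht)
    (by simp [sub_smul, ite_smul, Finset.sum_ite_mem, Finset.union_inter_cancel_left,
      Finset.union_inter_cancel_right, hst])
  ext v
  have := hcoeff v
  by_cases hv : v ∈ s <;> by_cases hw : v ∈ t <;> simp_all

theorem Finset.eq_pair_of_mem {α : Type*} [DecidableEq α] {s : Finset α} {x y : α}
    (hs : s.card = 2) (hxy : x ≠ y) (hx : x ∈ s) (hy : y ∈ s) : s = {x, y} :=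
  (Finset.eq_of_subset_of_card_le (Finset.insert_subset hx (Finset.singleton_subset_iff.2 hy))
    (by rw [hs, Finset.card_pair hxy])).symm

theorem Set.Intersecting.exists_mem_forall_of_card_eq_two {α : Type*} [DecidableEq α]
    {S : Set (Finset α)} (hS : S.Intersecting) (hcard : ∀ e ∈ S, e.card = 2)
    (hlt : 3 < S.ncard) :
    ∃ c, ∀ e ∈ S, c ∈ e := by
  by_contra! hmiss
  have meets_pair : ∀ e ∈ S, ∀ {u v : α}, {u, v} ∈ S → u ∈ e ∨ v ∈ e := fun e he _ _ huv => by
    simpa [Finset.disjoint_insert_right, or_iff_not_imp_left] using hS he huv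
  obtain ⟨e₁, he₁⟩ := Set.nonempty_of_ncard_ne_zero (by omega : S.ncard ≠ 0)
  obtain ⟨x, y, hxy, rfl⟩ := Finset.card_eq_two.1 (hcard e₁ he₁)
  obtain ⟨e₂, he₂, hx₂⟩ := hmiss x
  obtain ⟨e₃, he₃, hy₃⟩ := hmiss y
  have hy₂ : y ∈ e₂ := (meets_pair e₂ he₂ he₁).resolve_left hx₂
  obtain ⟨z, hz₂, hzy⟩ := Finset.exists_mem_ne (by rw [hcard e₂ he₂]; norm_num) y
  have hxz : x ≠ z := fun h => hx₂ (h ▸ hz₂)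
  rw [Finset.eq_pair_of_mem (hcard e₂ he₂) hzy.symm hy₂ hz₂] at he₂
  have hx₃ : x ∈ e₃ := (meets_pair e₃ he₃ he₁).resolve_right hy₃
  have hz₃ : z ∈ e₃ := (meets_pair e₃ he₃ he₂).resolve_left hy₃
  rw [Finset.eq_pair_of_mem (hcard e₃ he₃) hxz hx₃ hz₃] at he₃
  -- every member of `S` meets the triangle `{x, y}, {y, z}, {x, z}` in two vertices
  have hsub : S ⊆ {{x, y}, {y, z}, {x, z}} := by
    intro e he
    have he2 := hcard e he
    by_cases hx : x ∈ e
    · by_cases hy : y ∈ e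
      · exact .inl (Finset.eq_pair_of_mem he2 hxy hx hy)
      · exact .inr (.inr (Finset.eq_pair_of_mem he2 hxz hx
          ((meets_pair e he he₂).resolve_left hy)))
    · exact .inr (.inl (Finset.eq_pair_of_mem he2 hzy.symm
        ((meets_pair e he he₁).resolve_left hx) ((meets_pair e he he₃).resolve_left hx)))
  have h3 : ({{x, y}, {y, z}, {x, z}} : Set (Finset α)).ncard ≤ 3 :=
    (Set.ncard_insert_le _ _).trans <| Nat.succ_le_succ <|
      (Set.ncard_insert_le _ _).trans (by rw [Set.ncard_singleton])
  have := Set.ncard_le_ncard hsub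
  omega

section CharTwo

variable {V : Type*} [AddCommGroup V] [Module (ZMod 2) V] {B : Set V}

theorem exists_card_eq_two_sum_eq_of_mem_add {v : V} (hv : v ∈ B + B) (hv0 : v ≠ 0) :
    ∃ e : Finset V, ↑e ⊆ B ∧ e.card = 2 ∧ ∑ u ∈ e, u = v := by
  classical
  obtain ⟨b, hb, b', hb', rfl⟩ := Set.mem_add.1 hv
  have hbb' : b ≠ b' := by
    rintro rfl
    exact hv0 (ZModModule.add_self b)
  exact ⟨{b, b'}, by simp [Set.insert_subset_iff, hb, hb'], Finset.card_pair hbb',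
    Finset.sum_pair hbb'⟩

theorem pair_eq_pair_of_add_eq_add (hB : LinearIndepOn (ZMod 2) id B) {b₁ b₂ b₃ b₄ : V}
    (h₁ : b₁ ∈ B) (h₂ : b₂ ∈ B) (h₃ : b₃ ∈ B) (h₄ : b₄ ∈ B) (hne : b₁ ≠ b₂)
    (h : b₁ + b₂ = b₃ + b₄) : ({b₁, b₂} : Set V) = {b₃, b₄} := by
  classical
  have hne' : b₃ ≠ b₄ := by
    rintro rfl
    rw [ZModModule.add_self, ← ZModModule.sub_eq_add, sub_eq_zero] at h
    exact hne h
  have := hB.injOn_finset_sum (x₁ := {b₁, b₂}) (x₂ := {b₃, b₄})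
    (by simp [Set.insert_subset_iff, h₁, h₂]) (by simp [Set.insert_subset_iff, h₃, h₄])
    (by simpa [Finset.sum_pair hne, Finset.sum_pair hne'] using h)
  simpa using congrArg (fun s : Finset V => (s : Set V)) this

-- two disjoint edges would write an element of `B + B` as a sum of four elements of `B`
theorem not_disjoint_of_sum_add_sum_mem_add (hB : LinearIndepOn (ZMod 2) id B) {e f : Finset V}
    (he : ↑e ⊆ B) (hf : ↑f ⊆ B) (he2 : e.card = 2) (hf2 : f.card = 2)
    (hsum : ∑ v ∈ e, v + ∑ v ∈ f, v ∈ B + B) : ¬Disjoint e f := by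
  classical
  intro hdisj
  have hefB : ↑(e ∪ f) ⊆ B := Finset.coe_union e f ▸ Set.union_subset he hf
  have hef4 : (e ∪ f).card = 4 := by rw [Finset.card_union_of_disjoint hdisj, he2, hf2]
  rw [← Finset.sum_union hdisj] at hsum
  by_cases h0 : ∑ v ∈ e ∪ f, v = 0
  · have := hB.injOn_finset_sum hefB (by simp) (h0.trans Finset.sum_empty.symm)
    simp [this] at hef4
  · obtain ⟨g, hgB, hg2, hg⟩ := exists_card_eq_two_sum_eq_of_mem_add hsum h0
    have := hB.injOn_finset_sum hefB hgB hg.symm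
    rw [this, hg2] at hef4
    exact absurd hef4 (by norm_num)

theorem eq_of_forall_add_mem (hB : LinearIndepOn (ZMod 2) id B) {A : Set V} (hA : 2 < A.ncard)
    {x y : V} (hx : ∀ a ∈ A, a + x ∈ B) (hy : ∀ a ∈ A, a + y ∈ B) : x = y := by
  by_contra hxy
  obtain ⟨a₁, ha₁⟩ := Set.nonempty_of_ncard_ne_zero (by omega : A.ncard ≠ 0)
  -- the pair `{a + x, a + y}` is the unique representation of `x + y`, whatever `a ∈ A`
  have hsub : A ⊆ {a₁, a₁ + y - x} := by
    intro a ha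
    have hpair := pair_eq_pair_of_add_eq_add hB (hx a ha) (hy a ha) (hx a₁ ha₁) (hy a₁ ha₁)
      ((add_right_injective a).ne hxy)
      (by linear_combination (norm := module) ZModModule.add_self a - ZModModule.add_self a₁)
    rcases Set.pair_eq_pair_iff.1 hpair with ⟨h, -⟩ | ⟨h, -⟩
    · exact .inl (add_right_cancel h)
    · exact .inr (eq_sub_of_add_eq h)
  have h2 : ({a₁, a₁ + y - x} : Set V).ncard ≤ 2 :=
    (Set.ncard_insert_le _ _).trans (by rw [Set.ncard_singleton])
  have := Set.ncard_le_ncard hsub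
  omega

theorem exists_forall_add_mem (hB : LinearIndepOn (ZMod 2) id B) {A : Set V} (hA : 4 < A.ncard)
    (hsub : A + A ⊆ B + B) : ∃ x, ∀ a ∈ A, a + x ∈ B := by
  classical
  obtain ⟨a₀, ha₀⟩ := Set.nonempty_of_ncard_ne_zero (by omega : A.ncard ≠ 0)
  set S : Set (Finset V) := {e | ↑e ⊆ B ∧ e.card = 2 ∧ a₀ + ∑ v ∈ e, v ∈ A}
  have hrep : ∀ a ∈ A, a ≠ a₀ → ∃ e ∈ S, a₀ + ∑ v ∈ e, v = a := by
    intro a ha hne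
    obtain ⟨e, heB, he2, hsum⟩ := exists_card_eq_two_sum_eq_of_mem_add
      (hsub (Set.add_mem_add ha₀ ha))
      (fun h => hne (by rw [← ZModModule.sub_eq_add, sub_eq_zero] at h; exact h.symm))
    have ha' : a₀ + ∑ v ∈ e, v = a := by rw [hsum, ← add_assoc, ZModModule.add_self, zero_add]
    exact ⟨e, ⟨heB, he2, ha' ▸ ha⟩, ha'⟩
  have hcardS : 3 < S.ncard := by
    have hinj : S.InjOn (fun e => a₀ + ∑ v ∈ e, v) := fun e he f hf h =>
      hB.injOn_finset_sum he.1 hf.1 (add_left_cancel h)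
    have himage : A \ {a₀} ⊆ (fun e => a₀ + ∑ v ∈ e, v) '' S := fun a ⟨ha, hne⟩ => hrep a ha hne
    have hA_fin : A.Finite := Set.finite_of_ncard_pos (by omega)
    calc 3 < (A \ {a₀}).ncard := by rw [Set.ncard_sdiff_singleton_of_mem ha₀]; omega
      _ ≤ ((fun e => a₀ + ∑ v ∈ e, v) '' S).ncard :=
        Set.ncard_le_ncard himage (hA_fin.subset (by rintro _ ⟨e, he, rfl⟩; exact he.2.2))
      _ = S.ncard := hinj.ncard_image
  have hS : S.Intersecting := fun e he f hf =>
    not_disjoint_of_sum_add_sum_mem_add hB he.1 hf.1 he.2.1 hf.2.1 <| by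
      convert hsub (Set.add_mem_add he.2.2 hf.2.2) using 1
      linear_combination (norm := module) -ZModModule.add_self a₀
  obtain ⟨c, hc⟩ := hS.exists_mem_forall_of_card_eq_two (fun e he => he.2.1) hcardS
  refine ⟨a₀ + c, fun a ha => ?_⟩
  by_cases hne : a = a₀
  · obtain ⟨e, he⟩ := Set.nonempty_of_ncard_ne_zero (by omega : S.ncard ≠ 0)
    rw [hne, ← add_assoc, ZModModule.add_self, zero_add]
    exact he.1 (hc e he)
  · obtain ⟨e, he, rfl⟩ := hrep a ha hne
    obtain ⟨d, hd, hdc⟩ := Finset.exists_mem_ne (by rw [he.2.1]; norm_num) c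
    have hcd : ∑ v ∈ e, v = c + d := by
      rw [Finset.eq_pair_of_mem he.2.1 hdc.symm (hc e he) hd, Finset.sum_pair hdc.symm]
    rw [hcd, show a₀ + (c + d) + (a₀ + c) = d by
      linear_combination (norm := module) ZModModule.add_self a₀ + ZModModule.add_self c]
    exact he.1 hd

end CharTwo

theorem stmt_3_general (ℓ : ℕ) (ℬ 𝒜 : Set (Fin ℓ → ZMod 2))
    (hB : LinearIndependent (ZMod 2) (fun b : ℬ => (b : Fin ℓ → ZMod 2)))
    (hA : 5 ≤ 𝒜.ncard) (hsub : 𝒜 + 𝒜 ⊆ ℬ + ℬ) :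
    ∃! x : Fin ℓ → ZMod 2, ∀ a ∈ 𝒜, a + x ∈ ℬ := by
  obtain ⟨x, hx⟩ := exists_forall_add_mem hB hA hsub
  exact ⟨x, hx, fun y hy => eq_of_forall_add_mem hB (by omega) hy hx⟩

/-- If `ℬ ⊆ (𝔽₂)^ℓ` is linearly independent, `|𝒜| ≥ 5` and `𝒜 + 𝒜 ⊆ ℬ + ℬ`,
then there is a unique `x` with `𝒜 + x ⊆ ℬ`. -/
theorem stmt_3 (ℓ : ℕ) (hℓ : 0 < ℓ) (ℬ 𝒜 : Set (Fin ℓ → ZMod 2))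
    (hB : LinearIndependent (ZMod 2) (fun b : ℬ => (b : Fin ℓ → ZMod 2)))
    (hA : 5 ≤ 𝒜.ncard) (hsub : 𝒜 + 𝒜 ⊆ ℬ + ℬ) :
    ∃! x : Fin ℓ → ZMod 2, ∀ a ∈ 𝒜, a + x ∈ ℬ :=
  stmt_3_general ℓ ℬ 𝒜 hB hA hsub
end

section
/- Let λ be a cardinal, 𝕄 a model with universe λ in a countable vocabulary, and define the splitting rank rk(w, 𝕄) on nonempty finite subsets w ⊆ λ as in the reference. Then for all ordinals δ ≥ γ and all nonempty finite sets v ⊆ w ⊆ λ: if rk(w, 𝕄) ≥ δ, then rk(v, 𝕄) ≥ γ. -/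
/-
Removing points from `w` only makes the defining conditions of `rk(w, 𝕄) ≥ δ` weaker: a formula
about the enumeration of `v ⊆ w` is, after relabelling its variables along `v ↪ w`, a formula about
the enumeration of `w`, with the same realizations when one coordinate is varied. Induction on `δ`
then gives monotonicity in the set. Monotonicity in the ordinal reduces to the successor step, where
the witness `α*` for the formula `⊤` gives `rk(w ∪ {α*}) ≥ δ`, hence `rk(w) ≥ δ` by the first part;
for `w = ∅` every condition is vacuous.
-/

open FirstOrder

/-- The increasing enumeration of a finite set in a linear order. -/
noncomputable def enumFun {M : Type*} [LinearOrder M] (w : Finset M) : Fin w.card → M :=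
  fun i => (w.orderIsoOfFin rfl i : M)

/-- `rk(w,𝕄) ≥ 0`: every quantifier-free formula satisfied by the increasing enumeration of `w`
remains satisfied after replacing any one coordinate by uncountably many elements. -/
def rkBase (L : Language) (M : Type*) [LinearOrder M] [L.Structure M] (w : Finset M) : Prop :=
  ∀ φ : L.Formula (Fin w.card), φ.IsQF → ∀ k : Fin w.card,
    φ.Realize (enumFun w) →
      ¬ ({α : M | φ.Realize (Function.update (enumFun w) k α)}).Countable

/-- Successor step of the splitting rank: given the predicate `IH` expressing `rk ≥ δ`,
this expresses `rk(w) ≥ δ + 1`. -/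
def rkSucc (L : Language) (M : Type*) [LinearOrder M] [L.Structure M]
    (IH : Finset M → Prop) (w : Finset M) : Prop :=
  ∀ φ : L.Formula (Fin w.card), φ.IsQF → ∀ k : Fin w.card,
    φ.Realize (enumFun w) →
      ∃ α : M, α ∉ w ∧ IH (insert α w) ∧ φ.Realize (Function.update (enumFun w) k α)

/-- The splitting rank relation `rk(w,𝕄) ≥ δ`, defined by transfinite recursion on `δ`. -/
noncomputable def rkGe (L : Language) (M : Type*) [LinearOrder M] [L.Structure M]
    (δ : Ordinal) : Finset M → Prop :=
  Ordinal.limitRecOn δ (rkBase L M) (fun _ IH => rkSucc L M IH)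
    (fun _ _ IH w => ∀ γ (hγ : γ < _), IH γ hγ w)


section SubsetIndex

variable {M : Type*} [LinearOrder M]

lemma enumFun_mem (w : Finset M) (i : Fin w.card) : enumFun w i ∈ w :=
  (w.orderIsoOfFin rfl i).2

lemma enumFun_injective (w : Finset M) : Function.Injective (enumFun w) :=
  fun _ _ h => (w.orderIsoOfFin rfl).injective (Subtype.ext h)

noncomputable def subsetIndex {v w : Finset M} (hvw : v ⊆ w) (i : Fin v.card) : Fin w.card :=
  (w.orderIsoOfFin rfl).symm ⟨enumFun v i, hvw (enumFun_mem v i)⟩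

lemma enumFun_comp_subsetIndex {v w : Finset M} (hvw : v ⊆ w) :
    enumFun w ∘ subsetIndex hvw = enumFun v := by
  funext i
  simp [enumFun, subsetIndex]

lemma subsetIndex_injective {v w : Finset M} (hvw : v ⊆ w) :
    Function.Injective (subsetIndex hvw) :=
  .of_comp (f := enumFun w) <| (enumFun_comp_subsetIndex hvw).symm ▸ enumFun_injective v

end SubsetIndex

section RkGe

variable {L : Language} {M : Type*} [LinearOrder M] [L.Structure M]

lemma realize_relabel_subsetIndex {v w : Finset M} (hvw : v ⊆ w) (φ : L.Formula (Fin v.card)) :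
    (φ.relabel (subsetIndex hvw)).Realize (enumFun w) ↔ φ.Realize (enumFun v) := by
  rw [Language.Formula.realize_relabel, enumFun_comp_subsetIndex hvw]

lemma realize_relabel_subsetIndex_update {v w : Finset M} (hvw : v ⊆ w)
    (φ : L.Formula (Fin v.card)) (k : Fin v.card) (α : M) :
    (φ.relabel (subsetIndex hvw)).Realize
        (Function.update (enumFun w) (subsetIndex hvw k) α) ↔
      φ.Realize (Function.update (enumFun v) k α) := by
  rw [Language.Formula.realize_relabel,
    Function.update_comp_eq_of_injective _ (subsetIndex_injective hvw), enumFun_comp_subsetIndex hvw]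

variable (L M)

lemma rkBase_antitone : Antitone (rkBase L M) := by
  intro v w hvw h φ hφ k hk hcount
  refine h (φ.relabel (subsetIndex hvw)) (hφ.relabel _) (subsetIndex hvw k)
    ((realize_relabel_subsetIndex hvw φ).2 hk) (hcount.mono fun α hα => ?_)
  exact (realize_relabel_subsetIndex_update hvw φ k α).1 hα

lemma rkSucc_antitone {IH : Finset M → Prop} (hIH : Antitone IH) :
    Antitone (rkSucc L M IH) := by
  intro v w hvw h φ hφ k hk
  obtain ⟨α, hαw, hα, hreal⟩ := h (φ.relabel (subsetIndex hvw)) (hφ.relabel _)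
    (subsetIndex hvw k) ((realize_relabel_subsetIndex hvw φ).2 hk)
  exact ⟨α, fun hαv => hαw (hvw hαv), hIH (Finset.insert_subset_insert α hvw) hα,
    (realize_relabel_subsetIndex_update hvw φ k α).1 hreal⟩

lemma rkGe_zero : rkGe L M 0 = rkBase L M := by
  rw [rkGe, Ordinal.limitRecOn_zero]

lemma rkGe_add_one (δ : Ordinal) : rkGe L M (δ + 1) = rkSucc L M (rkGe L M δ) := by
  rw [rkGe, Ordinal.limitRecOn_add_one]
  rfl

lemma rkGe_of_isSuccLimit {δ : Ordinal} (hδ : Order.IsSuccLimit δ) (w : Finset M) :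
    rkGe L M δ w ↔ ∀ γ < δ, rkGe L M γ w := by
  rw [rkGe, Ordinal.limitRecOn_limit _ _ _ _ hδ]
  rfl

lemma rkGe_antitone (δ : Ordinal) : Antitone (rkGe L M δ) := by
  induction δ using Ordinal.limitRecOn with
  | zero => exact rkGe_zero L M ▸ rkBase_antitone L M
  | add_one δ IH => exact rkGe_add_one L M δ ▸ rkSucc_antitone L M IH
  | limit δ hδ IH =>
    intro v w hvw h
    rw [rkGe_of_isSuccLimit L M hδ] at h ⊢
    exact fun γ hγ => IH γ hγ hvw (h γ hγ)

lemma rkGe_empty (δ : Ordinal) : rkGe L M δ ∅ := by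
  induction δ using Ordinal.limitRecOn with
  | zero => exact (rkGe_zero L M).symm ▸ fun _ _ k => k.elim0
  | add_one δ _ => exact (rkGe_add_one L M δ).symm ▸ fun _ _ k => k.elim0
  | limit δ hδ IH => exact (rkGe_of_isSuccLimit L M hδ ∅).2 IH

lemma rkGe_of_rkGe_add_one {δ : Ordinal} {w : Finset M} (h : rkGe L M (δ + 1) w) :
    rkGe L M δ w := by
  obtain rfl | hw := w.eq_empty_or_nonempty
  · exact rkGe_empty L M δ
  rw [rkGe_add_one] at h
  obtain ⟨α, -, hα, -⟩ := h ⊤ Language.BoundedFormula.IsQF.top ⟨0, Finset.card_pos.2 hw⟩ (by simp)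
  exact rkGe_antitone L M δ (Finset.subset_insert α w) hα

lemma rkGe_antitone_ordinal (w : Finset M) : Antitone fun δ => rkGe L M δ w := by
  intro γ δ hγδ h
  induction δ using Ordinal.limitRecOn with
  | zero => rwa [nonpos_iff_eq_zero.1 hγδ]
  | add_one δ IH =>
    obtain rfl | hγ := eq_or_lt_of_le hγδ
    · exact h
    exact IH (Order.lt_add_one_iff.1 hγ) (rkGe_of_rkGe_add_one L M h)
  | limit δ hδ IH =>
    obtain rfl | hγ := eq_or_lt_of_le hγδ
    · exact h
    exact (rkGe_of_isSuccLimit L M hδ w).1 h γ hγ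

end RkGe

theorem stmt_5_general (L : Language) (M : Type*) [LinearOrder M] [L.Structure M]
    (δ γ : Ordinal) (hγδ : γ ≤ δ) (v w : Finset M) (hvw : v ⊆ w)
    (h : rkGe L M δ w) : rkGe L M γ v :=
  rkGe_antitone L M γ hvw (rkGe_antitone_ordinal L M w hγδ h)

/-- Monotonicity of the splitting rank: if `v ⊆ w` are nonempty finite sets and `γ ≤ δ`,
then `rk(w,𝕄) ≥ δ` implies `rk(v,𝕄) ≥ γ`. -/
theorem stmt_5 (L : Language) (M : Type*) [LinearOrder M] [L.Structure M]
    (δ γ : Ordinal) (hγδ : γ ≤ δ) (v w : Finset M) (hv : v.Nonempty) (hvw : v ⊆ w)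
    (h : rkGe L M δ w) : rkGe L M γ v :=
  stmt_5_general L M δ γ hγδ v w hvw h
end

section
/- NPr¹(ℵ₁) holds: there is a model 𝕄* with universe ω₁ and countable vocabulary such that 1 + rk(w, 𝕄*) ≤ 1 (i.e. rk(w, 𝕄*) ≤ 0) for all nonempty finite w ⊆ ω₁. -/
open FirstOrder Cardinal

/-- `NPr^ε(λ)`: there is a model with universe of cardinality `λ` in a countable vocabulary
all of whose nonempty finite subsets `w` satisfy `1 + rk(w) ≤ ε`. -/
def NPr (ε : Ordinal) (lam : Cardinal) : Prop :=
  ∃ (M : Type) (instO : LinearOrder M) (L : FirstOrder.Language.{0, 0}) (instS : L.Structure M),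
    Cardinal.mk M = lam ∧ L.card ≤ Cardinal.aleph0 ∧
    ∀ w : Finset M, w.Nonempty → ∀ δ : Ordinal, @rkGe L M instO instS δ w → 1 + δ ≤ ε

/-! Take `ω₁` with its order. If `a < b` are the two least elements of `w`, the formula
`x₀ ≤ x₁` holds on `w`, but moving `x₀` only sweeps out the countable set `Iic b`; hence
`rk(w) ≥ 0` fails as soon as `|w| ≥ 2`. Rank `≥ γ + 1` at `w` produces a strictly larger set of
rank `≥ γ`, and rank `≥` a limit implies rank `≥ 1`, so a nonempty `w` can only have rank `≥ 0`. -/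

namespace FirstOrder.Language

section SplittingRank

variable {L : Language} {M : Type*} [LinearOrder M] [L.Structure M]

theorem rkGe_zero : rkGe L M 0 = rkBase L M :=
  Ordinal.limitRecOn_zero _ _ _

theorem rkGe_add_one (γ : Ordinal) : rkGe L M (γ + 1) = rkSucc L M (rkGe L M γ) :=
  Ordinal.limitRecOn_add_one _ _ _ _

theorem rkGe_of_isSuccLimit {δ : Ordinal} (hδ : Order.IsSuccLimit δ) {w : Finset M}
    (h : rkGe L M δ w) {γ : Ordinal} (hγ : γ < δ) : rkGe L M γ w := by
  unfold rkGe at h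
  rw [Ordinal.limitRecOn_limit _ _ _ _ hδ] at h
  exact h γ hγ

/-- Rank `≥ γ + 1` at `w` yields a strictly larger set of rank `≥ γ`, so once rank `≥ 0` fails
beyond singletons, every nonempty set has rank exactly `0`. -/
theorem eq_zero_of_rkGe (hB : ∀ w : Finset M, 2 ≤ w.card → ¬ rkBase L M w) {δ : Ordinal}
    {w : Finset M} (hw : w.Nonempty) (hδ : rkGe L M δ w) : δ = 0 := by
  induction δ using Ordinal.limitRecOn generalizing w with
  | zero => rfl
  | add_one γ IH =>
    rw [rkGe_add_one] at hδ
    obtain ⟨α, hαw, hα, -⟩ := hδ ⊤ BoundedFormula.IsQF.top ⟨0, Finset.card_pos.2 hw⟩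
      (Formula.realize_top.2 trivial)
    obtain rfl : γ = 0 := IH (Finset.insert_nonempty α w) hα
    rw [rkGe_zero] at hα
    refine absurd hα (hB _ ?_)
    rw [Finset.card_insert_of_notMem hαw]
    have := Finset.card_pos.2 hw
    omega
  | limit δ hlim IH =>
    have h1 : (1 : Ordinal) < δ := by simpa using hlim.succ_lt hlim.pos
    exact absurd (IH 1 h1 hw (rkGe_of_isSuccLimit hlim hδ h1)) one_ne_zero

end SplittingRank

/-- With `x₀ ≤ x₁` true on the two least elements of `w`, moving `x₀` sweeps out only `Iic x₁`. -/
theorem not_rkBase_of_countable_Iic {L : Language} [L.IsOrdered] {M : Type*} [LinearOrder M]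
    [L.Structure M] [L.OrderedStructure M] (hM : ∀ a : M, (Set.Iic a).Countable)
    {w : Finset M} (hw : 2 ≤ w.card) : ¬ rkBase L M w := by
  intro h
  let i₀ : Fin w.card := ⟨0, by omega⟩
  let i₁ : Fin w.card := ⟨1, by omega⟩
  have hne : i₁ ≠ i₀ := by simp [i₀, i₁, Fin.ext_iff]
  let φ : L.Formula (Fin w.card) := (var (Sum.inl i₀)).le (var (Sum.inl i₁))
  have hφ (v : Fin w.card → M) : φ.Realize v ↔ v i₀ ≤ v i₁ := by simp [φ, Formula.Realize]
  refine h φ (BoundedFormula.IsAtomic.rel _ _).isQF i₀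
    ((hφ _).2 ((w.orderIsoOfFin rfl).monotone (by simp [i₀, i₁, Fin.le_def]))) ?_
  convert hM (enumFun w i₁) using 1
  ext α
  simp [hφ, Function.update_of_ne hne]

end FirstOrder.Language

theorem countable_Iic_ord_aleph_one (a : (aleph 1).ord.ToType) : (Set.Iic a).Countable := by
  rw [← Set.Iio_insert]
  refine (le_aleph0_iff_set_countable.1 ?_).insert a
  exact lt_aleph_one_iff.1 (by simpa using mk_Iio_lt a)

/-- `NPr¹(ℵ₁)` holds. -/
theorem stmt_6 : NPr 1 (Cardinal.aleph 1) := by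
  let : Language.order.Structure (aleph 1).ord.ToType := Language.orderStructure _
  have : Language.order.OrderedStructure (aleph 1).ord.ToType := ⟨fun _ => Iff.rfl⟩
  refine ⟨(aleph 1).ord.ToType, inferInstance, Language.order, inferInstance, by simp, by simp, ?_⟩
  intro w hw δ hδ
  rw [Language.eq_zero_of_rkGe
    (fun _ => Language.not_rkBase_of_countable_Iic countable_Iic_ord_aleph_one) hw hδ]
  simp
end

section
/- If 𝐦 ∈ 𝐌_{T̄,ι} and ∞ > ndrk_ι(𝐦) = β > α, then there is 𝐧 ∈ 𝐌_{T̄,ι} with 𝐦 ⊑ 𝐧 and ndrk_ι(𝐧) = α exactly. -/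
open scoped Classical

/-- Elements of the Cantor group `2^ω` (coordinatewise addition mod 2). A node of the tree
`2^{<ω}` of length `ℓ` is encoded as an element of `2^ω` vanishing from coordinate `ℓ` on. -/
abbrev CSeq := ℕ → ZMod 2

/-- The restriction of `x` to its first `l` coordinates (extended by `0`). -/
def restr (x : CSeq) (l : ℕ) : CSeq := fun k => if k < l then x k else 0

/-- `T` is (the family of level sets of) a tree `⊆ 2^{<ω}` with no maximal nodes. -/
def IsTreeSeq (T : ℕ → Set CSeq) : Prop :=
  (∀ l, ∀ x ∈ T l, restr x l = x) ∧
  (∀ l l', l' ≤ l → ∀ x ∈ T l, restr x l' ∈ T l') ∧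
  (∀ l, ∀ x ∈ T l, ∃ y ∈ T (l + 1), restr y l = x)

/-- The set `lim(T)` of `ω`-branches of the tree `T`. -/
def Branches (T : ℕ → Set CSeq) : Set CSeq := {x | ∀ l, restr x l ∈ T l}

/-- The family `𝐌_{T̄,ι}` of finite approximations (Definition 2.10).  The functions `h` and `g`
are normalized to take the value `0` outside their intended domain
`{(i,η,ν) : i < ι, η,ν ∈ u, η ≠ ν}`. -/
structure MElem (Tbar : ℕ → ℕ → Set CSeq) (iota : ℕ) where
  len : ℕ
  len_pos : 0 < len
  u : Finset CSeq
  u_supp : ∀ x ∈ u, restr x len = x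
  card_two : 2 ≤ u.card
  h : ℕ → CSeq → CSeq → ℕ
  g : ℕ → CSeq → CSeq → CSeq
  h_junk : ∀ i η ν, ¬(i < iota ∧ η ∈ u ∧ ν ∈ u ∧ η ≠ ν) → h i η ν = 0
  g_junk : ∀ i η ν, ¬(i < iota ∧ η ∈ u ∧ ν ∈ u ∧ η ≠ ν) → g i η ν = 0
  g_mem : ∀ i < iota, ∀ η ∈ u, ∀ ν ∈ u, η ≠ ν → g i η ν ∈ Tbar (h i η ν) len
  add_eq : ∀ i < iota, ∀ η ∈ u, ∀ ν ∈ u, η ≠ ν → η + g i η ν = ν + g i ν η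
  nodup : ∀ η ∈ u, ∀ ν ∈ u, η ≠ ν → ∀ i < iota, ∀ j < iota,
    (g i η ν = g j η ν → i = j) ∧ (g i ν η = g j ν η → i = j) ∧ g i η ν ≠ g j ν η
  ext_branch : ∃ (F : CSeq → CSeq) (G : ℕ → CSeq → CSeq → CSeq),
    (∀ η ∈ u, restr (F η) len = η) ∧
    ∀ i < iota, ∀ η ∈ u, ∀ ν ∈ u, η ≠ ν →
      restr (G i η ν) len = g i η ν ∧ G i η ν ∈ Branches (Tbar (h i η ν)) ∧
      F η + G i η ν = F ν + G i ν η

/-- The extension relation `𝐦 ⊑ 𝐧` on `𝐌_{T̄,ι}` (Definition 2.12). -/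
def MExt {Tbar : ℕ → ℕ → Set CSeq} {iota : ℕ} (m n : MElem Tbar iota) : Prop :=
  m.len ≤ n.len ∧
  m.u = n.u.image (fun η => restr η m.len) ∧
  ∀ i < iota, ∀ η ∈ n.u, ∀ ν ∈ n.u, η ≠ ν → restr η m.len ≠ restr ν m.len →
    m.h i (restr η m.len) (restr ν m.len) = n.h i η ν ∧
    m.g i (restr η m.len) (restr ν m.len) = restr (n.g i η ν) m.len

/-- The non-disjointness rank relation `ndrk_ι(𝐦) ≥ α` (Definition 2.14),
defined by transfinite recursion on `α`. -/
noncomputable def ndrkGe (Tbar : ℕ → ℕ → Set CSeq) (iota : ℕ) (α : Ordinal) :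
    MElem Tbar iota → Prop :=
  Ordinal.limitRecOn α (fun _ => True)
    (fun _ IH m => ∀ ν ∈ m.u, ∃ n : MElem Tbar iota,
        m.len < n.len ∧ MExt m n ∧ IH n ∧
        2 ≤ (n.u.filter (fun η => restr η m.len = ν)).card)
    (fun _ _ IH m => ∀ β (hβ : β < _), IH β hβ m)

/-!
Since `ndrk(𝐦) ≥ α + 1`, every node `ν ∈ u_𝐦` has a proper extension `𝐧` of rank `≥ α` splitting
above `ν`; taking for `ν` a node witnessing `ndrk(𝐦) ≱ β + 1`, that `𝐧` has rank `< β`. Every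
rank is attained exactly (the least ordinal `δ` with `ndrk(𝐧) ≱ δ` is neither `0` nor a limit, by
the limit clause), so `ndrk(𝐧) = γ` for some `α ≤ γ < β`, and induction on `β` finishes.
-/

lemma restr_restr (x : CSeq) {a b : ℕ} (h : a ≤ b) :
    restr (restr x b) a = restr x a := by
  funext k
  by_cases hk : k < a
  · simp [restr, hk, hk.trans_le h]
  · simp [restr, hk]

theorem Ordinal.exists_lt_and_not_add_one_of_not {P : Ordinal → Prop} (zero : P 0)
    (limit : ∀ o, Order.IsSuccLimit o → (∀ a < o, P a) → P o) {β : Ordinal} (hβ : ¬ P β) :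
    ∃ γ < β, P γ ∧ ¬ P (γ + 1) := by
  induction β using Ordinal.limitRecOn with
  | zero => exact absurd zero hβ
  | add_one δ IH =>
    by_cases hδ : P δ
    · exact ⟨δ, Order.lt_add_one_iff.mpr le_rfl, hδ, hβ⟩
    · obtain ⟨γ, hγδ, hγ⟩ := IH hδ
      exact ⟨γ, hγδ.trans (Order.lt_add_one_iff.mpr le_rfl), hγ⟩
  | limit o ho IH =>
    obtain ⟨a, hao, ha⟩ : ∃ a < o, ¬ P a := by
      by_contra! h
      exact hβ (limit o ho h)
    obtain ⟨γ, hγa, hγ⟩ := IH a hao ha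
    exact ⟨γ, hγa.trans hao, hγ⟩

section Ndrk

variable {Tbar : ℕ → ℕ → Set CSeq} {iota : ℕ}

lemma MExt.trans {m n p : MElem Tbar iota} (hmn : MExt m n) (hnp : MExt n p) : MExt m p := by
  obtain ⟨hlen₁, hu₁, hhg₁⟩ := hmn
  obtain ⟨hlen₂, hu₂, hhg₂⟩ := hnp
  refine ⟨hlen₁.trans hlen₂, ?_, ?_⟩
  · rw [hu₁, hu₂, Finset.image_image]
    exact Finset.image_congr fun η _ => restr_restr η hlen₁
  · intro i hi η hη ν hν hne hrne
    have hηn : restr η n.len ∈ n.u := hu₂ ▸ Finset.mem_image_of_mem _ hη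
    have hνn : restr ν n.len ∈ n.u := hu₂ ▸ Finset.mem_image_of_mem _ hν
    have hrη := restr_restr η hlen₁
    have hrν := restr_restr ν hlen₁
    have hne' : restr η n.len ≠ restr ν n.len := fun h => hrne (by rw [← hrη, ← hrν, h])
    obtain ⟨hh₂, hg₂⟩ := hhg₂ i hi η hη ν hν hne hne'
    obtain ⟨hh₁, hg₁⟩ := hhg₁ i hi _ hηn _ hνn hne' (by rwa [hrη, hrν])
    rw [hrη, hrν] at hh₁ hg₁
    exact ⟨hh₁.trans hh₂, by rw [hg₁, hg₂, restr_restr _ hlen₁]⟩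

lemma ndrkGe_zero (m : MElem Tbar iota) : ndrkGe Tbar iota 0 m := by
  simp [ndrkGe]

lemma ndrkGe_add_one {α : Ordinal} {m : MElem Tbar iota} :
    ndrkGe Tbar iota (α + 1) m ↔ ∀ ν ∈ m.u, ∃ n : MElem Tbar iota,
      m.len < n.len ∧ MExt m n ∧ ndrkGe Tbar iota α n ∧
      2 ≤ (n.u.filter (fun η => restr η m.len = ν)).card := by
  rw [ndrkGe, Ordinal.limitRecOn_add_one]
  rfl

lemma ndrkGe_of_isSuccLimit {α : Ordinal} (hα : Order.IsSuccLimit α) {m : MElem Tbar iota} :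
    ndrkGe Tbar iota α m ↔ ∀ β < α, ndrkGe Tbar iota β m := by
  rw [ndrkGe, Ordinal.limitRecOn_limit _ _ _ _ hα]
  rfl

lemma ndrkGe_add_one_mono {α β : Ordinal}
    (hαβ : ∀ n : MElem Tbar iota, ndrkGe Tbar iota α n → ndrkGe Tbar iota β n)
    {m : MElem Tbar iota} (hm : ndrkGe Tbar iota (α + 1) m) : ndrkGe Tbar iota (β + 1) m := by
  rw [ndrkGe_add_one] at hm ⊢
  intro ν hν
  obtain ⟨n, hlen, hext, hn, hsplit⟩ := hm ν hν
  exact ⟨n, hlen, hext, hαβ n hn, hsplit⟩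

lemma ndrkGe_of_ndrkGe_add_one (α : Ordinal) :
    ∀ m : MElem Tbar iota, ndrkGe Tbar iota (α + 1) m → ndrkGe Tbar iota α m := by
  induction α using Ordinal.limitRecOn with
  | zero => exact fun m _ => ndrkGe_zero m
  | add_one δ IH => exact fun m => ndrkGe_add_one_mono IH
  | limit o ho IH =>
    intro m hm
    rw [ndrkGe_of_isSuccLimit ho]
    intro δ hδ
    refine IH δ hδ m (ndrkGe_add_one_mono (fun n hn => ?_) hm)
    exact (ndrkGe_of_isSuccLimit ho).mp hn δ hδ

lemma ndrkGe_anti {α β : Ordinal} (hαβ : α ≤ β) {m : MElem Tbar iota}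
    (hm : ndrkGe Tbar iota β m) : ndrkGe Tbar iota α m := by
  induction β using Ordinal.limitRecOn with
  | zero => exact (nonpos_iff_eq_zero.mp hαβ) ▸ hm
  | add_one δ IH =>
    rcases hαβ.eq_or_lt with rfl | hlt
    · exact hm
    · exact IH (Order.lt_add_one_iff.mp hlt) (ndrkGe_of_ndrkGe_add_one δ m hm)
  | limit o ho _ =>
    rcases hαβ.eq_or_lt with rfl | hlt
    · exact hm
    · exact (ndrkGe_of_isSuccLimit ho).mp hm α hlt

def NdrkEq (Tbar : ℕ → ℕ → Set CSeq) (iota : ℕ) (α : Ordinal) (m : MElem Tbar iota) : Prop :=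
  ndrkGe Tbar iota α m ∧ ¬ ndrkGe Tbar iota (α + 1) m

lemma exists_ndrkEq_of_not_ndrkGe {α β : Ordinal} {n : MElem Tbar iota}
    (hα : ndrkGe Tbar iota α n) (hβ : ¬ ndrkGe Tbar iota β n) :
    ∃ γ, α ≤ γ ∧ γ < β ∧ NdrkEq Tbar iota γ n := by
  obtain ⟨γ, hγβ, hγ⟩ := Ordinal.exists_lt_and_not_add_one_of_not (P := (ndrkGe Tbar iota · n))
    (ndrkGe_zero n) (fun o ho h => (ndrkGe_of_isSuccLimit ho).mpr h) hβ
  refine ⟨γ, ?_, hγβ, hγ⟩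
  by_contra! hγα
  exact hγ.2 (ndrkGe_anti (Order.add_one_le_of_lt hγα) hα)

lemma exists_mExt_ndrkEq_of_lt {α β : Ordinal} (hαβ : α < β) {m : MElem Tbar iota}
    (hm : NdrkEq Tbar iota β m) :
    ∃ n, MExt m n ∧ ∃ γ, α ≤ γ ∧ γ < β ∧ NdrkEq Tbar iota γ n := by
  obtain ⟨hge, hnot⟩ := hm
  rw [ndrkGe_add_one] at hnot
  push Not at hnot
  obtain ⟨ν, hν, hν_nosplit⟩ := hnot
  have hα1 := ndrkGe_add_one.mp (ndrkGe_anti (Order.add_one_le_of_lt hαβ) hge)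
  obtain ⟨n, hlen, hext, hn, hsplit⟩ := hα1 ν hν
  have hnβ : ¬ ndrkGe Tbar iota β n := fun h => (hν_nosplit n hlen hext h).not_ge hsplit
  exact ⟨n, hext, exists_ndrkEq_of_not_ndrkGe hn hnβ⟩

end Ndrk

theorem stmt_13_general (Tbar : ℕ → ℕ → Set CSeq) (iota : ℕ)
    (m : MElem Tbar iota) (α β : Ordinal) (hαβ : α < β)
    (hge : ndrkGe Tbar iota β m) (hexact : ¬ ndrkGe Tbar iota (β + 1) m) :
    ∃ n : MElem Tbar iota, MExt m n ∧
      ndrkGe Tbar iota α n ∧ ¬ ndrkGe Tbar iota (α + 1) n := by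
  induction β using WellFoundedLT.induction generalizing m with
  | _ β IH =>
    obtain ⟨n, hmn, γ, hαγ, hγβ, hn⟩ := exists_mExt_ndrkEq_of_lt hαβ ⟨hge, hexact⟩
    rcases hαγ.eq_or_lt with rfl | hαγ
    · exact ⟨n, hmn, hn⟩
    · obtain ⟨p, hnp, hp⟩ := IH γ hγβ n hαγ hn.1 hn.2
      exact ⟨p, hmn.trans hnp, hp⟩

/-- If `∞ > ndrk_ι(𝐦) = β > α`, then there is `𝐧 ∈ 𝐌_{T̄,ι}` with `𝐦 ⊑ 𝐧` and
`ndrk_ι(𝐧) = α` exactly. -/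
theorem stmt_13 (Tbar : ℕ → ℕ → Set CSeq) (iota : ℕ)
    (htree : ∀ k, IsTreeSeq (Tbar k)) (hiota : 2 ≤ iota)
    (m : MElem Tbar iota) (α β : Ordinal) (hαβ : α < β)
    (hge : ndrkGe Tbar iota β m) (hexact : ¬ ndrkGe Tbar iota (β + 1) m) :
    ∃ n : MElem Tbar iota, MExt m n ∧
      ndrkGe Tbar iota α n ∧ ¬ ndrkGe Tbar iota (α + 1) n :=
  stmt_13_general Tbar iota m α β hαβ hge hexact
end

section
/- Assume 𝐦 ∈ 𝐌_{T̄,ι} and u' ⊆ u_𝐦 with |u'| ≥ 2. Define 𝐦↾u' by restricting the functions hᵢ^𝐦 and gᵢ^𝐦 to pairs of distinct elements of u' and keeping ℓ_𝐦. Then 𝐦↾u' ∈ 𝐌_{T̄,ι} and ndrk_ι(𝐦) ≤ ndrk_ι(𝐦↾u'). -/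
open scoped Classical

noncomputable def restrictM {Tbar : ℕ → ℕ → Set CSeq} {iota : ℕ}
    (m : MElem Tbar iota) (u' : Finset CSeq) (hsub : u' ⊆ m.u) (hcard : 2 ≤ u'.card) :
    MElem Tbar iota where
  len := m.len
  len_pos := m.len_pos
  u := u'
  u_supp := fun x hx => m.u_supp x (hsub hx)
  card_two := hcard
  h := fun i η ν => if i < iota ∧ η ∈ u' ∧ ν ∈ u' ∧ η ≠ ν then m.h i η ν else 0
  g := fun i η ν => if i < iota ∧ η ∈ u' ∧ ν ∈ u' ∧ η ≠ ν then m.g i η ν else 0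
  h_junk := fun i η ν h => if_neg h
  g_junk := fun i η ν h => if_neg h
  g_mem := by
    intro i hi η hη ν hν hne
    have c1 : i < iota ∧ η ∈ u' ∧ ν ∈ u' ∧ η ≠ ν := ⟨hi, hη, hν, hne⟩
    simp only [if_pos c1]
    exact m.g_mem i hi η (hsub hη) ν (hsub hν) hne
  add_eq := by
    intro i hi η hη ν hν hne
    have c1 : i < iota ∧ η ∈ u' ∧ ν ∈ u' ∧ η ≠ ν := ⟨hi, hη, hν, hne⟩
    have c2 : i < iota ∧ ν ∈ u' ∧ η ∈ u' ∧ ν ≠ η := ⟨hi, hν, hη, hne.symm⟩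
    simp only [if_pos c1, if_pos c2]
    exact m.add_eq i hi η (hsub hη) ν (hsub hν) hne
  nodup := by
    intro η hη ν hν hne i hi j hj
    have c1 : i < iota ∧ η ∈ u' ∧ ν ∈ u' ∧ η ≠ ν := ⟨hi, hη, hν, hne⟩
    have c2 : j < iota ∧ η ∈ u' ∧ ν ∈ u' ∧ η ≠ ν := ⟨hj, hη, hν, hne⟩
    have c3 : i < iota ∧ ν ∈ u' ∧ η ∈ u' ∧ ν ≠ η := ⟨hi, hν, hη, hne.symm⟩
    have c4 : j < iota ∧ ν ∈ u' ∧ η ∈ u' ∧ ν ≠ η := ⟨hj, hν, hη, hne.symm⟩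
    simp only [if_pos c1, if_pos c2, if_pos c3, if_pos c4]
    exact m.nodup η (hsub hη) ν (hsub hν) hne i hi j hj
  ext_branch := by
    obtain ⟨F, G, hF, hG⟩ := m.ext_branch
    refine ⟨F, G, fun η hη => hF η (hsub hη), ?_⟩
    intro i hi η hη ν hν hne
    obtain ⟨h1, h2, h3⟩ := hG i hi η (hsub hη) ν (hsub hν) hne
    have c1 : i < iota ∧ η ∈ u' ∧ ν ∈ u' ∧ η ≠ ν := ⟨hi, hη, hν, hne⟩
    have c2 : i < iota ∧ ν ∈ u' ∧ η ∈ u' ∧ ν ≠ η := ⟨hi, hν, hη, hne.symm⟩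
    simp only [if_pos c1, if_pos c2]
    exact ⟨h1, h2, h3⟩

theorem ndrkGe_restrict {Tbar : ℕ → ℕ → Set CSeq} {iota : ℕ} :
    ∀ α : Ordinal, ∀ (m : MElem Tbar iota) (u' : Finset CSeq)
      (hsub : u' ⊆ m.u) (hcard : 2 ≤ u'.card),
      ndrkGe Tbar iota α m → ndrkGe Tbar iota α (restrictM m u' hsub hcard) := by
  intro α
  induction α using Ordinal.induction with
  | _ α IH =>
    rcases Ordinal.zero_or_succ_or_isSuccLimit α with h0 | ⟨β, rfl⟩ | hlim
    · subst h0
      intro m u' hsub hcard _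
      rw [ndrkGe, Ordinal.limitRecOn_zero]
      trivial
    · intro m u' hsub hcard hm
      rw [ndrkGe, Ordinal.limitRecOn_succ] at hm ⊢
      intro ν hν
      have hν' : ν ∈ m.u := hsub hν
      obtain ⟨n, hlen, hext, hIHn, hcount⟩ := hm ν hν'
      set u'' : Finset CSeq := n.u.filter (fun η => restr η m.len ∈ u') with hu''
      have hsub'' : u'' ⊆ n.u := Finset.filter_subset _ _
      have hfsub : n.u.filter (fun η => restr η m.len = ν) ⊆ u'' := by
        intro x hx
        rw [Finset.mem_filter] at hx ⊢
        exact ⟨hx.1, hx.2 ▸ hν⟩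
      have hcard'' : 2 ≤ u''.card := le_trans hcount (Finset.card_le_card hfsub)
      refine ⟨restrictM n u'' hsub'' hcard'', hlen, ?_, ?_, ?_⟩
      · refine ⟨hext.1, ?_, ?_⟩
        · ext x
          simp only [restrictM, Finset.mem_image]
          constructor
          · intro hx
            have : x ∈ n.u.image (fun η => restr η m.len) := hext.2.1 ▸ hsub hx
            obtain ⟨η, hη, hηx⟩ := Finset.mem_image.mp this
            exact ⟨η, Finset.mem_filter.mpr ⟨hη, hηx ▸ hx⟩, hηx⟩
          · rintro ⟨η, hη, rfl⟩
            exact (Finset.mem_filter.mp hη).2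
        · intro i hi η hη ν₀ hν₀ hne hrne
          have hη' : η ∈ n.u := hsub'' hη
          have hν₀' : ν₀ ∈ n.u := hsub'' hν₀
          have hηu : restr η m.len ∈ u' := (Finset.mem_filter.mp hη).2
          have hνu : restr ν₀ m.len ∈ u' := (Finset.mem_filter.mp hν₀).2
          obtain ⟨e1, e2⟩ := hext.2.2 i hi η hη' ν₀ hν₀' hne hrne
          constructor
          · show (if _ then m.h i _ _ else 0) = (if _ then n.h i η ν₀ else 0)
            rw [if_pos ⟨hi, hηu, hνu, hrne⟩, if_pos ⟨hi, hη, hν₀, hne⟩]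
            exact e1
          · show (if _ then m.g i _ _ else 0) = restr (if _ then n.g i η ν₀ else 0) m.len
            rw [if_pos ⟨hi, hηu, hνu, hrne⟩, if_pos ⟨hi, hη, hν₀, hne⟩]
            exact e2
      · exact IH β (Order.lt_succ β) n u'' hsub'' hcard'' hIHn
      · refine le_trans hcount (Finset.card_le_card ?_)
        intro x hx
        rw [Finset.mem_filter] at hx
        show x ∈ Finset.filter _ u''
        rw [Finset.mem_filter]
        exact ⟨hfsub (Finset.mem_filter.mpr hx), hx.2⟩
    · intro m u' hsub hcard hm
      rw [ndrkGe, Ordinal.limitRecOn_limit _ _ _ _ hlim] at hm ⊢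
      intro β hβ
      exact IH β hβ m u' hsub hcard (hm β hβ)

/-- Restriction: if `u' ⊆ u_𝐦` with `|u'| ≥ 2`, then the restriction `𝐦 ↾ u'`
(keeping `ℓ_𝐦` and restricting `h`, `g` to pairs of distinct elements of `u'`)
belongs to `𝐌_{T̄,ι}` and `ndrk_ι(𝐦) ≤ ndrk_ι(𝐦 ↾ u')`. -/
theorem stmt_15 (Tbar : ℕ → ℕ → Set CSeq) (iota : ℕ)
    (htree : ∀ k, IsTreeSeq (Tbar k)) (hiota : 2 ≤ iota)
    (m : MElem Tbar iota) (u' : Finset CSeq) (hsub : u' ⊆ m.u) (hcard : 2 ≤ u'.card) :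
    ∃ m' : MElem Tbar iota,
      m'.len = m.len ∧ m'.u = u' ∧
      (∀ i < iota, ∀ η ∈ u', ∀ ν ∈ u', η ≠ ν →
        m'.h i η ν = m.h i η ν ∧ m'.g i η ν = m.g i η ν) ∧
      ∀ α : Ordinal, ndrkGe Tbar iota α m → ndrkGe Tbar iota α m' := by
  exact ⟨restrictM m u' hsub hcard, rfl, rfl,
    fun i hi η hη ν hν hne =>
      ⟨if_pos ⟨hi, hη, hν, hne⟩, if_pos ⟨hi, hη, hν, hne⟩⟩,
    fun α => ndrkGe_restrict α m u' hsub hcard⟩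
end

section
/- Cut-and-paste for the poset of finite YZR(ε)-systems: given a finite YZR(ε)-system s with universe an initial segment N^s of ω and any finite YZR(ε)-system q, there is a finite YZR(ε)-system t extending s (universe N^t ⊇ N^s, with r̄^t, j̄^t, k̄^t extending those of s) together with an increasing injection φ: X^q → [N^s, N^t) such that for each nonempty v ⊆ X^q, r̄^t(φ[v]) = r̄^q(v), j̄^t(φ[v]) = j̄^q(v), and k̄^t(φ[v]) = k̄^q(v). -/
open scoped Classical

/-- A `YZR(ε)`-system (Definition 3.1): a nonempty set `X` of ordinals together with functions
`r : [X]^{<ω}\{∅} → ε+1`, `j, k : [X]^{<ω}\{∅} → ω` satisfying monotonicity of `r`,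
positivity of `r` on singletons, and the witness condition `(*)₅`.
Here `a_{k(w)}` is encoded as the element `a ∈ w` with exactly `k w` members of `w` below it,
and `|w ∩ b|` as the number of members of `w` below `b`. -/
structure YZRSystem (ε : Ordinal) where
  X : Set Ordinal
  nonempty : X.Nonempty
  r : Finset Ordinal → Ordinal
  j : Finset Ordinal → ℕ
  k : Finset Ordinal → ℕ
  r_le : ∀ w : Finset Ordinal, w.Nonempty → ↑w ⊆ X → r w ≤ ε
  mono : ∀ u w : Finset Ordinal, u.Nonempty → u ⊆ w → ↑w ⊆ X → r w ≤ r u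
  r_pos : ∀ a ∈ X, 0 < r {a}
  k_lt : ∀ w : Finset Ordinal, w.Nonempty → ↑w ⊆ X → k w < w.card
  witness : ∀ w : Finset Ordinal, w.Nonempty → ↑w ⊆ X →
    ∀ a ∈ w, (w.filter (fun x => x < a)).card = k w →
    ∀ b ∈ X, b ∉ w →
    ¬ ((w.filter (fun x => x < b)).card = k w ∧
       j (insert b (w.erase a)) = j w ∧ r (insert b w) = r w)

/-!
The copy of `q` lives on the interval `[Nˢ, Nˢ + |Xq|)`: pull `q` back along the increasing
bijection of that interval onto `Xq`, then glue `s` and the copy. On a set lying on one side the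
glued system is that side; on a set meeting both sides it has `r = 0`, `k = 0`, and `j` larger
than every value of `j` on the copy, plus the number of points at or above the least element of
the set.

The witness condition survives the gluing. For `w` meeting both sides, `k w = 0` puts `b` below
all of `w` and makes `a` the least element, so trading `a` for `b` keeps the set mixed and strictly
increases `j`. For `w ⊆ Xs` and `b` in the copy, all `|w| > k w` elements of `w` lie below `b`.
For `w` in the copy and `b ∈ Xs`, trading `a` for `b` gives a mixed set, whose `j` is too large,
unless `w = {a}`, and then `r {b, a} = 0 < r {a}`.
-/

open Finset

section

variable {α β : Type*}

namespace Finset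

theorem image_erase_of_injOn [DecidableEq α] [DecidableEq β] {f : α → β} {s : Finset α}
    (hf : Set.InjOn f s) {a : α} (ha : a ∈ s) :
    (s.erase a).image f = (s.image f).erase (f a) := by
  ext y
  simp only [mem_image, mem_erase]
  constructor
  · rintro ⟨x, ⟨hxa, hx⟩, rfl⟩
    exact ⟨fun h => hxa (hf hx ha h), x, hx, rfl⟩
  · rintro ⟨hya, x, hx, rfl⟩
    exact ⟨x, ⟨fun h => hya (h ▸ rfl), hx⟩, rfl⟩

theorem coe_insert_subset [DecidableEq α] {s : Set α} {b : α} {u : Finset α} (hb : b ∈ s)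
    (hu : ↑u ⊆ s) : ↑(insert b u) ⊆ s := by
  rw [coe_insert]
  exact Set.insert_subset hb hu

theorem coe_erase_subset [DecidableEq α] {s : Set α} (a : α) {u : Finset α} (hu : ↑u ⊆ s) :
    ↑(u.erase a) ⊆ s :=
  (coe_subset.2 (erase_subset a u)).trans hu

theorem coe_image_subset_of_mapsTo [DecidableEq β] {f : α → β} {s : Set α} {t : Set β}
    (hf : Set.MapsTo f s t) {w : Finset α} (hw : ↑w ⊆ s) : ↑(w.image f) ⊆ t := by
  rw [coe_image]
  exact (hf.mono_left hw).image_subset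

variable {γ : Type*} {A B : Set α} {f g h : Finset α → γ} {w : Finset α}

variable (A B f g h) in
noncomputable def sideCases (w : Finset α) : γ :=
  if ↑w ⊆ A then f w else if ↑w ⊆ B then g w else h w

theorem sideCases_of_subset_left (hw : ↑w ⊆ A) : sideCases A B f g h w = f w :=
  if_pos hw

theorem sideCases_of_subset_right (hAB : Disjoint A B) (hw : w.Nonempty) (hwB : ↑w ⊆ B) :
    sideCases A B f g h w = g w := by
  obtain ⟨x, hx⟩ := hw
  rw [sideCases, if_neg fun hwA => Set.disjoint_left.1 hAB (hwA hx) (hwB hx), if_pos hwB]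

theorem sideCases_of_not_subset (hA : ¬↑w ⊆ A) (hB : ¬↑w ⊆ B) :
    sideCases A B f g h w = h w := by
  rw [sideCases, if_neg hA, if_neg hB]

theorem sideCases_cases (P : γ → Prop) (hA : ↑w ⊆ A → P (f w)) (hB : ↑w ⊆ B → P (g w))
    (hmix : ¬↑w ⊆ A → ¬↑w ⊆ B → P (h w)) : P (sideCases A B f g h w) := by
  unfold sideCases
  split_ifs with hwA hwB
  exacts [hA hwA, hB hwB, hmix hwA hwB]

end Finset

section LinearOrder

variable [LinearOrder α] [LinearOrder β]

theorem StrictMonoOn.card_filter_image_lt {f : α → β} {s : Set α} (hf : StrictMonoOn f s)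
    {w : Finset α} (hw : ↑w ⊆ s) {a : α} (ha : a ∈ s) :
    #{x ∈ w.image f | x < f a} = #{x ∈ w | x < a} := by
  rw [filter_image, card_image_of_injOn (hf.injOn.mono fun x hx => hw (mem_filter.1 hx).1)]
  exact congrArg card (filter_congr fun x hx => hf.lt_iff_lt (hw hx) ha)

theorem Set.RightInvOn.strictMonoOn {f : α → β} {g : β → α} {s : Set α} {t : Set β}
    (hfg : Set.RightInvOn g f t) (hf : StrictMonoOn f s) (hg : Set.MapsTo g t s) :
    StrictMonoOn g t := by
  intro x hx y hy hxy
  by_contra! hyx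
  have := hf.monotoneOn (hg hy) (hg hx) hyx
  rw [hfg hx, hfg hy] at this
  exact hxy.not_ge this

namespace Finset

variable (F : Finset α)

theorem strictMonoOn_card_filter_lt : StrictMonoOn (fun a => #{x ∈ F | x < a}) F := by
  intro a ha b _ hab
  refine card_lt_card ((ssubset_iff_of_subset fun x hx => ?_).2 ⟨a, ?_, ?_⟩)
  · simp only [mem_filter] at hx ⊢
    exact ⟨hx.1, hx.2.trans hab⟩
  · simpa [mem_filter] using ⟨ha, hab⟩
  · simp

theorem bijOn_card_filter_lt : Set.BijOn (fun a => #{x ∈ F | x < a}) F (range #F) := by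
  have hmaps : Set.MapsTo (fun a => #{x ∈ F | x < a}) F (range #F) := fun a ha =>
    mem_range.2 (card_lt_card (filter_ssubset.2 ⟨a, ha, lt_irrefl a⟩))
  exact ⟨hmaps, (strictMonoOn_card_filter_lt F).injOn,
    surjOn_of_injOn_of_card_le _ hmaps (strictMonoOn_card_filter_lt F).injOn (by simp)⟩

end Finset

end LinearOrder

end

namespace YZRSystem

variable {ε : Ordinal}

noncomputable def comap (q : YZRSystem ε) (Y : Set Ordinal) (hY : Y.Nonempty)
    (g : Ordinal → Ordinal) (hg : StrictMonoOn g Y) (hgY : Set.MapsTo g Y q.X) : YZRSystem ε where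
  X := Y
  nonempty := hY
  r w := q.r (w.image g)
  j w := q.j (w.image g)
  k w := q.k (w.image g)
  r_le w hw hwY := q.r_le _ (hw.image g) (coe_image_subset_of_mapsTo hgY hwY)
  mono u w hu huw hwY :=
    q.mono _ _ (hu.image g) (image_subset_image huw) (coe_image_subset_of_mapsTo hgY hwY)
  r_pos a ha := by simpa using q.r_pos (g a) (hgY ha)
  k_lt w hw hwY :=
    (q.k_lt _ (hw.image g) (coe_image_subset_of_mapsTo hgY hwY)).trans_le card_image_le
  witness w hw hwY a ha hka b hb hbw := by
    rintro ⟨hkb, hj, hr⟩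
    refine q.witness _ (hw.image g) (coe_image_subset_of_mapsTo hgY hwY) (g a)
      (mem_image_of_mem g ha) ?_ (g b) (hgY hb) ?_ ⟨?_, ?_, ?_⟩
    · rwa [hg.card_filter_image_lt hwY (hwY ha)]
    · intro hgb
      obtain ⟨x, hx, hxb⟩ := mem_image.1 hgb
      exact hbw (hg.injOn (hwY hx) hb hxb ▸ hx)
    · rwa [hg.card_filter_image_lt hwY hb]
    · rwa [image_insert, image_erase_of_injOn (hg.injOn.mono hwY) ha] at hj
    · rwa [image_insert] at hr

theorem comap_image_of_leftInvOn (q : YZRSystem ε) {Y : Set Ordinal} {hY : Y.Nonempty}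
    {g : Ordinal → Ordinal} {hg : StrictMonoOn g Y} {hgY : Set.MapsTo g Y q.X}
    {φ : Ordinal → Ordinal} (hgφ : Set.LeftInvOn g φ q.X) {v : Finset Ordinal} (hv : ↑v ⊆ q.X) :
    (q.comap Y hY g hg hgY).r (v.image φ) = q.r v ∧
      (q.comap Y hY g hg hgY).j (v.image φ) = q.j v ∧
      (q.comap Y hY g hg hgY).k (v.image φ) = q.k v := by
  have hback : (v.image φ).image g = v := by
    rw [image_image, image_congr (f := g ∘ φ) (g := id) fun a ha => hgφ (hv ha), image_id]
  exact ⟨congrArg q.r hback, congrArg q.j hback, congrArg q.k hback⟩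

section Glue

variable (q : YZRSystem ε) (S : Finset Ordinal)

noncomputable def mixedJ (w : Finset Ordinal) : ℕ :=
  S.powerset.sup q.j + 1 + #{x ∈ S | ∃ y ∈ w, y ≤ x}

variable {s q : YZRSystem ε} {S w : Finset Ordinal}

theorem j_lt_mixedJ (hw : w ⊆ S) (u : Finset Ordinal) : q.j w < mixedJ q S u := by
  have := le_sup (f := q.j) (mem_powerset.2 hw)
  simp only [mixedJ]
  omega

theorem mixedJ_lt_mixedJ_insert {b : Ordinal} (hb : b ∈ S) (hbw : ∀ y ∈ w, b < y)
    (u : Finset Ordinal) : mixedJ q S w < mixedJ q S (insert b u) := by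
  suffices #{x ∈ S | ∃ y ∈ w, y ≤ x} < #{x ∈ S | ∃ y ∈ insert b u, y ≤ x} by
    simp only [mixedJ]; omega
  refine card_lt_card ((ssubset_iff_of_subset fun x hx => ?_).2 ⟨b, ?_, ?_⟩)
  · simp only [mem_filter] at hx ⊢
    obtain ⟨y, hy, hyx⟩ := hx.2
    exact ⟨hx.1, b, mem_insert_self b u, (hbw y hy).le.trans hyx⟩
  · simpa using hb
  · simp only [mem_filter, not_and, not_exists]
    exact fun _ y hy => (hbw y hy).not_ge

theorem disjoint_X_of_forall_lt (hsq : ∀ x ∈ s.X, ∀ y ∈ q.X, x < y) : Disjoint s.X q.X :=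
  Set.disjoint_left.2 fun x hxs hxq => (hsq x hxs x hxq).false

theorem glue_witness_of_subset_left (hsq : ∀ x ∈ s.X, ∀ y ∈ q.X, x < y) (hw : w.Nonempty)
    (hws : ↑w ⊆ s.X) {a : Ordinal} (ha : a ∈ w) (hka : #{x ∈ w | x < a} = s.k w)
    {b : Ordinal} (hb : b ∈ s.X ∪ q.X) (hbw : b ∉ w) (hkb : #{x ∈ w | x < b} = s.k w)
    (hj : sideCases s.X q.X s.j q.j (mixedJ q S) (insert b (w.erase a)) = s.j w)
    (hr : sideCases s.X q.X s.r q.r 0 (insert b w) = s.r w) : False := by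
  rcases hb with hbs | hbq
  · rw [sideCases_of_subset_left (coe_insert_subset hbs (coe_erase_subset a hws))] at hj
    rw [sideCases_of_subset_left (coe_insert_subset hbs hws)] at hr
    exact s.witness w hw hws a ha hka b hbs hbw ⟨hkb, hj, hr⟩
  · have hall : #{x ∈ w | x < b} = #w :=
      congrArg card (filter_true_of_mem fun x hx => hsq x (hws hx) b hbq)
    exact (s.k_lt w hw hws).ne (hkb ▸ hall)

theorem glue_witness_of_subset_right (hS : s.X ∪ q.X ⊆ S) (hsq : ∀ x ∈ s.X, ∀ y ∈ q.X, x < y)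
    (hw : w.Nonempty) (hwq : ↑w ⊆ q.X) {a : Ordinal} (ha : a ∈ w)
    (hka : #{x ∈ w | x < a} = q.k w) {b : Ordinal} (hb : b ∈ s.X ∪ q.X) (hbw : b ∉ w)
    (hkb : #{x ∈ w | x < b} = q.k w)
    (hj : sideCases s.X q.X s.j q.j (mixedJ q S) (insert b (w.erase a)) = q.j w)
    (hr : sideCases s.X q.X s.r q.r 0 (insert b w) = q.r w) : False := by
  have hdisj := disjoint_X_of_forall_lt hsq
  rcases hb with hbs | hbq
  · have hbq : b ∉ q.X := Set.disjoint_left.1 hdisj hbs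
    obtain ⟨x, hx⟩ | hwa := (w.erase a).eq_empty_or_nonempty.symm
    · have hxs : x ∉ s.X := Set.disjoint_right.1 hdisj (hwq (mem_of_mem_erase hx))
      rw [sideCases_of_not_subset (fun h => hxs (h (mem_insert_of_mem hx)))
        (fun h => hbq (h (mem_insert_self b _)))] at hj
      exact (j_lt_mixedJ (fun y hy => hS (Or.inr (hwq hy))) _).ne' hj
    · obtain rfl : w = {a} := ((erase_eq_empty_iff w a).1 hwa).resolve_left hw.ne_empty
      have has : a ∉ s.X := Set.disjoint_right.1 hdisj (hwq (mem_singleton_self a))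
      rw [sideCases_of_not_subset (fun h => has (h (mem_insert_of_mem (mem_singleton_self a))))
        (fun h => hbq (h (mem_insert_self b _)))] at hr
      exact (q.r_pos a (hwq (mem_singleton_self a))).ne hr
  · rw [sideCases_of_subset_right hdisj (insert_nonempty _ _)
      (coe_insert_subset hbq (coe_erase_subset a hwq))] at hj
    rw [sideCases_of_subset_right hdisj (insert_nonempty _ _) (coe_insert_subset hbq hwq)] at hr
    exact q.witness w hw hwq a ha hka b hbq hbw ⟨hkb, hj, hr⟩

theorem glue_witness_of_not_subset (hS : s.X ∪ q.X ⊆ S) (hsq : ∀ x ∈ s.X, ∀ y ∈ q.X, x < y)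
    (hwX : ↑w ⊆ s.X ∪ q.X) (hws : ¬↑w ⊆ s.X) (hwq : ¬↑w ⊆ q.X)
    {a : Ordinal} (hka : #{x ∈ w | x < a} = 0)
    {b : Ordinal} (hb : b ∈ s.X ∪ q.X) (hbw : b ∉ w) (hkb : #{x ∈ w | x < b} = 0)
    (hj : sideCases s.X q.X s.j q.j (mixedJ q S) (insert b (w.erase a)) = mixedJ q S w) :
    False := by
  obtain ⟨x₁, hx₁w, hx₁s⟩ := Set.not_subset.1 hws
  obtain ⟨x₀, hx₀w, hx₀q⟩ := Set.not_subset.1 hwq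
  have hx₁q : x₁ ∈ q.X := (hwX hx₁w).resolve_left hx₁s
  have hx₀s : x₀ ∈ s.X := (hwX hx₀w).resolve_right hx₀q
  have hbw' : ∀ y ∈ w, b < y := fun y hy =>
    (not_lt.1 (card_filter_eq_zero_iff.1 hkb y hy)).lt_of_ne fun h => hbw (h ▸ hy)
  have hax₁ : x₁ ≠ a := fun h =>
    card_filter_eq_zero_iff.1 hka x₀ hx₀w (h ▸ hsq x₀ hx₀s x₁ hx₁q)
  have hbq : b ∉ q.X := fun hbq => (hsq x₀ hx₀s b hbq).not_gt (hbw' x₀ hx₀w)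
  rw [sideCases_of_not_subset
    (fun h => hx₁s (h (mem_insert_of_mem (mem_erase.2 ⟨hax₁, hx₁w⟩))))
    (fun h => hbq (h (mem_insert_self b _)))] at hj
  exact (mixedJ_lt_mixedJ_insert (hS hb) hbw' _).ne' hj

variable (s q S) in
noncomputable def glue (hS : s.X ∪ q.X ⊆ S) (hsq : ∀ x ∈ s.X, ∀ y ∈ q.X, x < y) :
    YZRSystem ε where
  X := s.X ∪ q.X
  nonempty := s.nonempty.inl
  r := sideCases s.X q.X s.r q.r 0
  j := sideCases s.X q.X s.j q.j (mixedJ q S)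
  k := sideCases s.X q.X s.k q.k 0
  r_le w hw _ := sideCases_cases (· ≤ ε) (s.r_le w hw) (q.r_le w hw) fun _ _ => zero_le
  mono u w hu huw _ := sideCases_cases (· ≤ sideCases s.X q.X s.r q.r 0 u)
    (fun hws => (sideCases_of_subset_left ((coe_subset.2 huw).trans hws)).symm ▸
      s.mono u w hu huw hws)
    (fun hwq => (sideCases_of_subset_right (disjoint_X_of_forall_lt hsq) hu
      ((coe_subset.2 huw).trans hwq)).symm ▸ q.mono u w hu huw hwq)
    fun _ _ => zero_le
  r_pos a ha := by
    rcases ha with has | haq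
    · rw [sideCases_of_subset_left (by simpa using has)]
      exact s.r_pos a has
    · rw [sideCases_of_subset_right (disjoint_X_of_forall_lt hsq) (singleton_nonempty a)
        (by simpa using haq)]
      exact q.r_pos a haq
  k_lt w hw _ := sideCases_cases (· < #w) (s.k_lt w hw) (q.k_lt w hw) fun _ _ => hw.card_pos
  witness w hw hwX a ha hka b hb hbw := by
    rintro ⟨hkb, hj, hr⟩
    by_cases hws : ↑w ⊆ s.X
    · rw [sideCases_of_subset_left hws] at hka hkb hj hr
      exact glue_witness_of_subset_left hsq hw hws ha hka hb hbw hkb hj hr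
    by_cases hwq : ↑w ⊆ q.X
    · rw [sideCases_of_subset_right (disjoint_X_of_forall_lt hsq) hw hwq] at hka hkb hj hr
      exact glue_witness_of_subset_right hS hsq hw hwq ha hka hb hbw hkb hj hr
    · rw [sideCases_of_not_subset hws hwq] at hka hkb hj
      exact glue_witness_of_not_subset hS hsq hwX hws hwq hka hb hbw hkb hj

theorem glue_of_subset_left (hS : s.X ∪ q.X ⊆ S) (hsq : ∀ x ∈ s.X, ∀ y ∈ q.X, x < y)
    (hws : ↑w ⊆ s.X) :
    (glue s q S hS hsq).r w = s.r w ∧ (glue s q S hS hsq).j w = s.j w ∧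
      (glue s q S hS hsq).k w = s.k w :=
  ⟨sideCases_of_subset_left hws, sideCases_of_subset_left hws, sideCases_of_subset_left hws⟩

theorem glue_of_subset_right (hS : s.X ∪ q.X ⊆ S) (hsq : ∀ x ∈ s.X, ∀ y ∈ q.X, x < y)
    (hw : w.Nonempty) (hwq : ↑w ⊆ q.X) :
    (glue s q S hS hsq).r w = q.r w ∧ (glue s q S hS hsq).j w = q.j w ∧
      (glue s q S hS hsq).k w = q.k w :=
  have hdisj := disjoint_X_of_forall_lt hsq
  ⟨sideCases_of_subset_right hdisj hw hwq, sideCases_of_subset_right hdisj hw hwq,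
    sideCases_of_subset_right hdisj hw hwq⟩

end Glue

end YZRSystem

namespace Ordinal

theorem strictMono_natCast_add (N : ℕ) : StrictMono fun m : ℕ => ((N + m : ℕ) : Ordinal) :=
  fun _ _ h => Nat.cast_lt.2 (Nat.add_lt_add_left h N)

theorem bijOn_natCast_add (N n : ℕ) :
    Set.BijOn (fun m : ℕ => ((N + m : ℕ) : Ordinal)) (range n)
      (Set.Ico (N : Ordinal) ((N + n : ℕ) : Ordinal)) := by
  refine ⟨fun m hm => ⟨?_, ?_⟩, (strictMono_natCast_add N).injective.injOn, fun y hy => ?_⟩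
  · exact Nat.cast_le.2 (N.le_add_right m)
  · exact Nat.cast_lt.2 (Nat.add_lt_add_left (mem_range.1 hm) N)
  · obtain ⟨k, rfl⟩ := eq_natCast_of_le_natCast hy.2.le
    have hk : N ≤ k ∧ k < N + n := ⟨Nat.cast_le.1 hy.1, Nat.cast_lt.1 hy.2⟩
    exact ⟨k - N, mem_range.2 (by omega), congrArg Nat.cast (by omega)⟩

theorem Iio_natCast_eq_image_range (n : ℕ) :
    Set.Iio (n : Ordinal) = ↑((range n).image (Nat.cast : ℕ → Ordinal)) := by
  rw [coe_image, coe_range, natCast_image_Iio]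

end Ordinal

theorem stmt_16_general (ε : Ordinal)
    (Ns : ℕ) (s : YZRSystem ε) (hXs : s.X = Set.Iio (Ns : Ordinal))
    (q : YZRSystem ε) (hq : q.X.Finite) :
    ∃ (Nt : ℕ) (t : YZRSystem ε), Ns ≤ Nt ∧ t.X = Set.Iio (Nt : Ordinal) ∧
      (∀ w : Finset Ordinal, w.Nonempty → ↑w ⊆ s.X →
        t.r w = s.r w ∧ t.j w = s.j w ∧ t.k w = s.k w) ∧
      ∃ φ : Ordinal → Ordinal, Set.InjOn φ q.X ∧ StrictMonoOn φ q.X ∧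
        (∀ a ∈ q.X, (Ns : Ordinal) ≤ φ a ∧ φ a < (Nt : Ordinal)) ∧
        ∀ v : Finset Ordinal, v.Nonempty → ↑v ⊆ q.X →
          t.r (v.image φ) = q.r v ∧ t.j (v.image φ) = q.j v ∧ t.k (v.image φ) = q.k v := by
  set F := hq.toFinset
  have hF : (↑F : Set Ordinal) = q.X := hq.coe_toFinset
  set Nt := Ns + #F
  set φ := (fun m : ℕ => ((Ns + m : ℕ) : Ordinal)) ∘ fun a => #{x ∈ F | x < a}
  have hφ : StrictMonoOn φ q.X :=
    hF ▸ (Ordinal.strictMono_natCast_add Ns).comp_strictMonoOn (strictMonoOn_card_filter_lt F)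
  have hbij : Set.BijOn φ q.X (Set.Ico (Ns : Ordinal) (Nt : Ordinal)) :=
    hF ▸ (Ordinal.bijOn_natCast_add Ns #F).comp (bijOn_card_filter_lt F)
  have hinv := hbij.invOn_invFunOn
  let q' := q.comap _ (q.nonempty.image φ |>.mono hbij.mapsTo.image_subset) _
    (hinv.2.strictMonoOn hφ hbij.surjOn.mapsTo_invFunOn) hbij.surjOn.mapsTo_invFunOn
  have hX : s.X ∪ q'.X = Set.Iio (Nt : Ordinal) := by
    rw [hXs]
    exact Set.Iio_union_Ico_eq_Iio (Nat.cast_le.2 (Nat.le_add_right _ _))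
  have hsq : ∀ x ∈ s.X, ∀ y ∈ q'.X, x < y := fun x hx y hy => (hXs ▸ hx).trans_le hy.1
  have hS := hX.trans_subset (Ordinal.Iio_natCast_eq_image_range Nt).le
  refine ⟨Nt, s.glue q' _ hS hsq, Nat.le_add_right _ _, hX,
    fun w _ hws => YZRSystem.glue_of_subset_left hS hsq hws,
    φ, hφ.injOn, hφ, fun a ha => hbij.mapsTo ha, fun v hv hvq => ?_⟩
  obtain ⟨hr, hj, hk⟩ := YZRSystem.glue_of_subset_right hS hsq (hv.image φ)
    (coe_image_subset_of_mapsTo hbij.mapsTo hvq)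
  obtain ⟨hr', hj', hk'⟩ := q.comap_image_of_leftInvOn hinv.1 hvq
  exact ⟨hr.trans hr', hj.trans hj', hk.trans hk'⟩

/-- Cut-and-paste for finite `YZR(ε)`-systems (Claim 3.6): any finite `YZR(ε)`-system `q`
can be copied into an end-extension `t` of a finite system `s` whose universe is an initial
segment of `ω`, with the copy placed inside `[Nˢ, Nᵗ)`. -/
theorem stmt_16 (ε : Ordinal) (h0 : 0 < ε) (h1 : ε < (Cardinal.aleph 1).ord)
    (Ns : ℕ) (hNs : 0 < Ns) (s : YZRSystem ε) (hXs : s.X = Set.Iio (Ns : Ordinal))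
    (q : YZRSystem ε) (hq : q.X.Finite) :
    ∃ (Nt : ℕ) (t : YZRSystem ε), Ns ≤ Nt ∧ t.X = Set.Iio (Nt : Ordinal) ∧
      (∀ w : Finset Ordinal, w.Nonempty → ↑w ⊆ s.X →
        t.r w = s.r w ∧ t.j w = s.j w ∧ t.k w = s.k w) ∧
      ∃ φ : Ordinal → Ordinal, Set.InjOn φ q.X ∧ StrictMonoOn φ q.X ∧
        (∀ a ∈ q.X, (Ns : Ordinal) ≤ φ a ∧ φ a < (Nt : Ordinal)) ∧
        ∀ v : Finset Ordinal, v.Nonempty → ↑v ⊆ q.X →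
          t.r (v.image φ) = q.r v ∧ t.j (v.image φ) = q.j v ∧ t.k (v.image φ) = q.k v :=
  stmt_16_general ε Ns s hXs q hq
end

section
/- For every countable ordinal ε with 0 < ε < ω₁ there exists a cute YZR(ε)-system: a YZR(ε)-system S with universe ω such that for every finite YZR(ε)-system q and every M < ω there is a quasi-embedding φ of q into S with range contained in [M, ω). -/
open scoped Classical

/-- A quasi-embedding of a `YZR(ε)`-system `q` into `S` (Definition 3.3): an increasing
injection `φ : X^q → X^S` preserving `r` and `k` on all nonempty finite subsets,
and preserving `j` on those of positive `r`-value. -/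
def QuasiEmb {ε : Ordinal} (q S : YZRSystem ε) (φ : Ordinal → Ordinal) : Prop :=
  StrictMonoOn φ q.X ∧ Set.MapsTo φ q.X S.X ∧
  ∀ v : Finset Ordinal, v.Nonempty → ↑v ⊆ q.X →
    S.r (v.image φ) = q.r v ∧ S.k (v.image φ) = q.k v ∧
    (0 < q.r v → S.j (v.image φ) = q.j v)

/-!
Since `ε < ω₁`, finite `YZR(ε)`-systems are, up to order isomorphism, described by countably many
codes. List the codes so that each one occurs arbitrarily far out, and lay the coded systems out
on `ω` as consecutive finite blocks. A set inside one block takes the values of its block; any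
other set gets `r = 0`, `k = 0`, and a `j`-value that is injective in the set and larger than every
`j`-value on the blocks it meets. The witness condition then reduces to that of a single block: if
`r w > 0`, then all the sets involved lie in the block of `w`, and if `r w = 0`, the new `j`-value
differs from `j w` either by injectivity or by size. Shifting a finite system into a far-out block
that carries its code gives the required quasi-embedding.
-/

universe u

structure IsYZRSystem (ε : Ordinal.{u}) {α : Type*} [LinearOrder α] (X : Set α)
    (r : Finset α → Ordinal.{u}) (j k : Finset α → ℕ) : Prop where
  r_le : ∀ w : Finset α, w.Nonempty → ↑w ⊆ X → r w ≤ ε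
  mono : ∀ u w : Finset α, u.Nonempty → u ⊆ w → ↑w ⊆ X → r w ≤ r u
  r_pos : ∀ a ∈ X, 0 < r {a}
  k_lt : ∀ w : Finset α, w.Nonempty → ↑w ⊆ X → k w < w.card
  witness : ∀ w : Finset α, w.Nonempty → ↑w ⊆ X →
    ∀ a ∈ w, (w.filter (fun x => x < a)).card = k w →
    ∀ b ∈ X, b ∉ w →
    ¬ ((w.filter (fun x => x < b)).card = k w ∧
       j (insert b (w.erase a)) = j w ∧ r (insert b w) = r w)

namespace YZRSystem

variable {ε : Ordinal.{u}}

theorem isYZRSystem (q : YZRSystem ε) : IsYZRSystem ε q.X q.r q.j q.k :=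
  ⟨q.r_le, q.mono, q.r_pos, q.k_lt, q.witness⟩

def ofIsYZRSystem {X : Set Ordinal.{u}} (hX : X.Nonempty) {r : Finset Ordinal.{u} → Ordinal.{u}}
    {j k : Finset Ordinal.{u} → ℕ} (h : IsYZRSystem ε X r j k) : YZRSystem ε :=
  ⟨X, hX, r, j, k, h.r_le, h.mono, h.r_pos, h.k_lt, h.witness⟩

end YZRSystem

section StrictMonoOn

variable {α β : Type*} [LinearOrder α] [LinearOrder β] {f : α → β} {X : Set α} {w : Finset α}
  {a : α}

theorem StrictMonoOn.mem_finsetImage_iff (hf : StrictMonoOn f X) (hw : ↑w ⊆ X) (ha : a ∈ X) :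
    f a ∈ w.image f ↔ a ∈ w := by
  rw [← Finset.mem_coe, Finset.coe_image, hf.injOn.mem_image_iff hw ha, Finset.mem_coe]

theorem StrictMonoOn.finsetImage_erase (hf : StrictMonoOn f X) (hw : ↑w ⊆ X) (ha : a ∈ X) :
    (w.erase a).image f = (w.image f).erase (f a) := by
  ext y
  simp only [Finset.mem_image, Finset.mem_erase]
  constructor
  · rintro ⟨x, ⟨hxa, hx⟩, rfl⟩
    exact ⟨fun h => hxa (hf.injOn (hw hx) ha h), x, hx, rfl⟩
  · rintro ⟨hne, x, hx, rfl⟩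
    exact ⟨x, ⟨by rintro rfl; exact hne rfl, hx⟩, rfl⟩

theorem StrictMonoOn.card_finsetImage (hf : StrictMonoOn f X) (hw : ↑w ⊆ X) :
    (w.image f).card = w.card :=
  Finset.card_image_of_injOn (hf.injOn.mono hw)

theorem StrictMonoOn.card_filter_lt_finsetImage (hf : StrictMonoOn f X) (hw : ↑w ⊆ X)
    (ha : a ∈ X) :
    ((w.image f).filter (fun y => y < f a)).card = (w.filter (fun x => x < a)).card := by
  rw [Finset.filter_image,
    hf.card_finsetImage ((Finset.coe_subset.2 (Finset.filter_subset _ w)).trans hw)]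
  exact congrArg Finset.card (Finset.filter_congr fun x hx => hf.lt_iff_lt (hw hx) ha)

end StrictMonoOn

namespace IsYZRSystem

variable {ε : Ordinal.{u}} {α β : Type*} [LinearOrder α] [LinearOrder β] {f : α → β}
  {X : Set α} {r : Finset β → Ordinal.{u}} {j k : Finset β → ℕ} {r' : Finset α → Ordinal.{u}}
  {j' k' : Finset α → ℕ}

theorem comap (h : IsYZRSystem ε (f '' X) r j k) (hf : StrictMonoOn f X)
    (hr : ∀ v : Finset α, v.Nonempty → ↑v ⊆ X → r' v = r (v.image f))
    (hj : ∀ v : Finset α, v.Nonempty → ↑v ⊆ X → j' v = j (v.image f))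
    (hk : ∀ v : Finset α, v.Nonempty → ↑v ⊆ X → k' v = k (v.image f)) :
    IsYZRSystem ε X r' j' k' := by
  have himg {v : Finset α} (hv : ↑v ⊆ X) : ↑(v.image f) ⊆ f '' X := by
    rw [Finset.coe_image]; exact Set.image_mono hv
  refine ⟨fun w hne hw => ?_, fun v w hne hvw hw => ?_, fun a ha => ?_, fun w hne hw => ?_, ?_⟩
  · rw [hr w hne hw]; exact h.r_le _ (hne.image f) (himg hw)
  · rw [hr w (hne.mono hvw) hw, hr v hne (subset_trans (by simpa using hvw) hw)]
    exact h.mono _ _ (hne.image f) (Finset.image_subset_image hvw) (himg hw)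
  · rw [hr {a} (by simp) (by simpa using ha), Finset.image_singleton]
    exact h.r_pos _ (Set.mem_image_of_mem f ha)
  · rw [hk w hne hw, ← hf.card_finsetImage hw]; exact h.k_lt _ (hne.image f) (himg hw)
  · intro w hne hw a ha hka b hb hbw ⟨hkb, hjb, hrb⟩
    have haX : a ∈ X := hw ha
    have hbw' : ↑(insert b w) ⊆ X := by simpa [Set.insert_subset_iff] using ⟨hb, hw⟩
    have hbaw : ↑(insert b (w.erase a)) ⊆ X :=
      subset_trans (Finset.coe_subset.2 (Finset.insert_subset_insert b (w.erase_subset a))) hbw'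
    refine h.witness _ (hne.image f) (himg hw) (f a) (Finset.mem_image_of_mem f ha) ?_ (f b)
      (Set.mem_image_of_mem f hb) (fun hfb => hbw ((hf.mem_finsetImage_iff hw hb).1 hfb))
      ⟨?_, ?_, ?_⟩
    · rw [hf.card_filter_lt_finsetImage hw haX, hka, hk w hne hw]
    · rw [hf.card_filter_lt_finsetImage hw hb, hkb, hk w hne hw]
    · rw [← hf.finsetImage_erase hw haX, ← Finset.image_insert, ← hj _ (by simp) hbaw,
        ← hj w hne hw, hjb]
    · rw [← Finset.image_insert, ← hr _ (by simp) hbw', ← hr w hne hw, hrb]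

end IsYZRSystem

namespace Glue

variable {ε : Ordinal.{u}} {ι : Type*} (blk : ℕ → ι)

def blockOf (w : Finset ℕ) : ι := blk (w.sup id)

variable (rb : ι → Finset ℕ → Ordinal.{u}) (jb kb : ι → Finset ℕ → ℕ) (jBound : ι → ℕ)

noncomputable def r (w : Finset ℕ) : Ordinal.{u} :=
  if ↑w ⊆ blk ⁻¹' {blockOf blk w} then rb (blockOf blk w) w else 0

noncomputable def k (w : Finset ℕ) : ℕ :=
  if ↑w ⊆ blk ⁻¹' {blockOf blk w} then kb (blockOf blk w) w else 0

noncomputable def j (w : Finset ℕ) : ℕ :=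
  if 0 < r blk rb w then jb (blockOf blk w) w
  else Nat.pair (w.sup fun m => jBound (blk m)) (Encodable.encode w) + 1

variable {blk rb jb kb jBound} {w : Finset ℕ} {t : ι}

theorem blockOf_eq (hne : w.Nonempty) (hw : ↑w ⊆ blk ⁻¹' {t}) : blockOf blk w = t := by
  obtain ⟨m, hm, hsup⟩ := w.exists_mem_eq_sup hne id
  rw [blockOf, hsup]
  exact hw hm

theorem r_of_subset (hne : w.Nonempty) (hw : ↑w ⊆ blk ⁻¹' {t}) : r blk rb w = rb t w := by
  rw [r, blockOf_eq hne hw, if_pos hw]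

theorem k_of_subset (hne : w.Nonempty) (hw : ↑w ⊆ blk ⁻¹' {t}) : k blk kb w = kb t w := by
  rw [k, blockOf_eq hne hw, if_pos hw]

theorem subset_of_r_pos (h : 0 < r blk rb w) : ↑w ⊆ blk ⁻¹' {blockOf blk w} := by
  by_contra hw
  rw [r, if_neg hw] at h
  exact h.false

theorem j_of_r_pos (h : 0 < r blk rb w) : j blk rb jb jBound w = jb (blockOf blk w) w := by
  rw [j, if_pos h]

theorem j_of_r_eq_zero (h : r blk rb w = 0) :
    j blk rb jb jBound w = Nat.pair (w.sup fun m => jBound (blk m)) (Encodable.encode w) + 1 := by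
  rw [j, if_neg h.not_gt]

variable (hb : ∀ t, IsYZRSystem ε (blk ⁻¹' {t}) (rb t) (jb t) (kb t))
include hb

theorem r_pos_singleton (m : ℕ) : 0 < r blk rb {m} := by
  rw [r_of_subset (Finset.singleton_nonempty m) (t := blk m) (by simp)]
  exact (hb _).r_pos m rfl

theorem r_mono {v : Finset ℕ} (hne : v.Nonempty) (hvw : v ⊆ w) : r blk rb w ≤ r blk rb v := by
  by_cases hw : ↑w ⊆ blk ⁻¹' {blockOf blk w}
  · have hv : ↑v ⊆ blk ⁻¹' {blockOf blk w} := subset_trans (Finset.coe_subset.2 hvw) hw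
    rw [r_of_subset (hne.mono hvw) hw, r_of_subset hne hv]
    exact (hb _).mono v w hne hvw hw
  · rw [r, if_neg hw]
    exact zero_le

theorem witness_of_r_pos (hne : w.Nonempty) (hpos : 0 < r blk rb w) {a : ℕ} (ha : a ∈ w)
    (hka : (w.filter (fun x => x < a)).card = k blk kb w) {b : ℕ} (hbw : b ∉ w) :
    ¬ ((w.filter (fun x => x < b)).card = k blk kb w ∧
       j blk rb jb jBound (insert b (w.erase a)) = j blk rb jb jBound w ∧
       r blk rb (insert b w) = r blk rb w) := by
  rintro ⟨hkb, hjb, hrb⟩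
  set t := blockOf blk w
  have hw : ↑w ⊆ blk ⁻¹' {t} := subset_of_r_pos hpos
  have hbw_pos : 0 < r blk rb (insert b w) := hrb ▸ hpos
  have hbw_sub : ↑(insert b w) ⊆ blk ⁻¹' {t} := by
    have h := subset_of_r_pos hbw_pos
    rwa [← blockOf_eq hne ((Finset.coe_subset.2 (Finset.subset_insert b w)).trans h)] at h
  have hsub : insert b (w.erase a) ⊆ insert b w := Finset.insert_subset_insert b (w.erase_subset a)
  have hbaw_sub : ↑(insert b (w.erase a)) ⊆ blk ⁻¹' {t} :=
    subset_trans (Finset.coe_subset.2 hsub) hbw_sub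
  have hbaw_pos : 0 < r blk rb (insert b (w.erase a)) :=
    hbw_pos.trans_le (r_mono hb (Finset.insert_nonempty _ _) hsub)
  rw [j_of_r_pos hbaw_pos, j_of_r_pos hpos, blockOf_eq (Finset.insert_nonempty _ _) hbaw_sub]
    at hjb
  rw [r_of_subset (Finset.insert_nonempty _ _) hbw_sub, r_of_subset hne hw] at hrb
  rw [k_of_subset hne hw] at hka hkb
  exact (hb t).witness w hne hw a ha hka b (hbw_sub (Finset.mem_insert_self b w)) hbw
    ⟨hkb, hjb, hrb⟩

omit hb in
theorem jb_lt_j_of_r_eq_zero (hJ : ∀ t u, ↑u ⊆ blk ⁻¹' {t} → jb t u ≤ jBound t)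
    (hzero : r blk rb w = 0) {u : Finset ℕ} {m : ℕ} (hm : m ∈ w) (hu : ↑u ⊆ blk ⁻¹' {blk m}) :
    jb (blk m) u < j blk rb jb jBound w := by
  rw [j_of_r_eq_zero hzero, Nat.lt_succ_iff]
  calc jb (blk m) u ≤ jBound (blk m) := hJ _ u hu
    _ ≤ w.sup fun m => jBound (blk m) := Finset.le_sup (f := fun m => jBound (blk m)) hm
    _ ≤ _ := Nat.left_le_pair _ _

theorem witness_of_r_eq_zero (hJ : ∀ t u, ↑u ⊆ blk ⁻¹' {t} → jb t u ≤ jBound t)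
    (hzero : r blk rb w = 0) {a : ℕ} (ha : a ∈ w) {b : ℕ} (hbw : b ∉ w) :
    j blk rb jb jBound (insert b (w.erase a)) ≠ j blk rb jb jBound w := by
  set w' := insert b (w.erase a)
  intro hjb
  obtain ⟨m, hm⟩ : (w.erase a).Nonempty := by
    rw [Finset.nonempty_iff_ne_empty, Ne, Finset.erase_eq_empty_iff]
    rintro (rfl | rfl)
    · exact Finset.notMem_empty a ha
    · exact (r_pos_singleton hb a).ne' hzero
  rcases (zero_le : 0 ≤ r blk rb w').lt_or_eq with hpos | hzero'
  · have hw' := subset_of_r_pos hpos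
    have hmw' : m ∈ w' := Finset.mem_insert_of_mem hm
    rw [j_of_r_pos hpos, ← hw' hmw'] at hjb
    exact (jb_lt_j_of_r_eq_zero hJ hzero (Finset.mem_of_mem_erase hm)
      (hw'.trans (by rw [hw' hmw']))).ne hjb
  · rw [j_of_r_eq_zero hzero'.symm, j_of_r_eq_zero hzero] at hjb
    have hw : w' = w := Encodable.encode_injective (Nat.pair_eq_pair.1 (Nat.succ_injective hjb)).2
    exact hbw (hw ▸ Finset.mem_insert_self b _)

theorem isYZRSystem (hJ : ∀ t u, ↑u ⊆ blk ⁻¹' {t} → jb t u ≤ jBound t) :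
    IsYZRSystem ε Set.univ (r blk rb) (j blk rb jb jBound) (k blk kb) := by
  refine ⟨fun w hne _ => ?_, fun v w hne hvw _ => r_mono hb hne hvw,
    fun m _ => r_pos_singleton hb m, fun w hne _ => ?_, ?_⟩
  · by_cases hw : ↑w ⊆ blk ⁻¹' {blockOf blk w}
    · rw [r_of_subset hne hw]; exact (hb _).r_le w hne hw
    · rw [r, if_neg hw]; exact zero_le
  · by_cases hw : ↑w ⊆ blk ⁻¹' {blockOf blk w}
    · rw [k_of_subset hne hw]; exact (hb _).k_lt w hne hw
    · rw [k, if_neg hw]; exact hne.card_pos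
  · intro w hne _ a ha hka b _ hbw
    rcases (zero_le : 0 ≤ r blk rb w).lt_or_eq with hpos | hzero
    · exact witness_of_r_pos hb hne hpos ha hka hbw
    · exact fun h => witness_of_r_eq_zero hb hJ hzero.symm ha hbw h.2.1

end Glue

section Enumeration

variable {α β : Type*} [LinearOrder α] [LinearOrder β]

theorem Finset.exists_strictMonoOn_image_Iio_card (s : Finset α) (hs : s.Nonempty) :
    ∃ ψ : ℕ → α, StrictMonoOn ψ (Set.Iio s.card) ∧ ψ '' Set.Iio s.card = s := by
  have : NeZero s.card := ⟨hs.card_pos.ne'⟩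
  have hval {m : ℕ} (hm : m ∈ Set.Iio s.card) : (Fin.ofNat s.card m : ℕ) = m :=
    Nat.mod_eq_of_lt hm
  refine ⟨fun m => s.orderEmbOfFin rfl (Fin.ofNat s.card m), fun x hx y hy hxy => ?_, ?_⟩
  · exact (s.orderEmbOfFin rfl).strictMono (Fin.lt_def.2 (by rwa [hval hx, hval hy]))
  · rw [← s.range_orderEmbOfFin rfl]
    ext x
    constructor
    · rintro ⟨m, -, rfl⟩
      exact ⟨_, rfl⟩
    · rintro ⟨i, rfl⟩
      exact ⟨i, i.isLt, congrArg _ (Fin.ext (hval i.isLt))⟩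

theorem StrictMonoOn.strictMonoOn_invFunOn [Nonempty α] {f : α → β} {A : Set α}
    (hf : StrictMonoOn f A) : StrictMonoOn (Function.invFunOn f A) (f '' A) := by
  intro x hx y hy hxy
  obtain ⟨hxA, hfx⟩ := Function.invFunOn_pos hx
  obtain ⟨hyA, hfy⟩ := Function.invFunOn_pos hy
  rw [← hfx, ← hfy] at hxy
  exact (hf.lt_iff_lt hxA hyA).1 hxy

end Enumeration

/-- A finite system on `{0, …, n - 1}`, given by its values `(r, j, k)` on the subsets. -/
def Code (ε : Ordinal.{u}) : Type (u + 1) :=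
  Σ n : ℕ, (Finset.range n).powerset → Set.Iic ε × ℕ × ℕ

namespace Code

variable {ε : Ordinal.{u}}

def size (c : Code ε) : ℕ := c.1

def val (c : Code ε) (u : Finset ℕ) : Set.Iic ε × ℕ × ℕ :=
  c.2 ⟨u ∩ Finset.range c.size, Finset.mem_powerset.2 Finset.inter_subset_right⟩

def r (c : Code ε) (u : Finset ℕ) : Ordinal.{u} := (c.val u).1

def j (c : Code ε) (u : Finset ℕ) : ℕ := (c.val u).2.1

def k (c : Code ε) (u : Finset ℕ) : ℕ := (c.val u).2.2

def Valid (c : Code ε) : Prop :=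
  0 < c.size ∧ IsYZRSystem ε (Set.Iio c.size) c.r c.j c.k

theorem val_of_subset (c : Code ε) {u : Finset ℕ} (hu : ↑u ⊆ Set.Iio c.size) :
    c.val u = c.2 ⟨u, Finset.mem_powerset.2 fun _ hm => Finset.mem_range.2 (hu hm)⟩ :=
  congrArg c.2 (Subtype.ext (Finset.inter_eq_left.2 fun _ hm => Finset.mem_range.2 (hu hm)))

theorem countable (h : ε < (Cardinal.aleph 1).ord) : Countable (Code ε) := by
  have : Countable (Set.Iio ε) := by
    rw [← Cardinal.mk_le_aleph0_iff, Cardinal.mk_Iio_ordinal, Cardinal.lift_le_aleph0,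
      ← Cardinal.lt_aleph_one_iff]
    exact Cardinal.lt_ord.1 h
  have : Countable (Set.Iic ε) := by
    rw [← Set.Iio_insert, Set.countable_coe_iff]
    exact (Set.countable_coe_iff.1 this).insert ε
  unfold Code
  infer_instance

theorem exists_valid (h0 : 0 < ε) : ∃ c : Code ε, c.Valid := by
  refine ⟨⟨1, fun _ => (⟨ε, Set.mem_Iic.2 le_rfl⟩, 0, 0)⟩, Nat.one_pos, fun _ _ _ => le_rfl,
    fun _ _ _ _ _ => le_rfl, fun _ _ => h0, fun w hne _ => hne.card_pos, ?_⟩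
  intro w _ hw a ha _ b hb hbw
  have hab : a = b := by
    have := hw ha
    simp only [Set.mem_Iio, size] at this hb
    omega
  exact absurd (hab ▸ ha) hbw

end Code

namespace YZRSystem

variable {ε : Ordinal.{u}}

theorem exists_code_of_finite (q : YZRSystem ε) (hq : q.X.Finite) :
    ∃ c : Code ε, c.Valid ∧ ∃ ι : Ordinal.{u} → ℕ, StrictMonoOn ι q.X ∧
      Set.MapsTo ι q.X (Set.Iio c.size) ∧ ∀ v : Finset Ordinal.{u}, v.Nonempty → ↑v ⊆ q.X →
        c.r (v.image ι) = q.r v ∧ c.j (v.image ι) = q.j v ∧ c.k (v.image ι) = q.k v := by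
  have hne : hq.toFinset.Nonempty := by simpa using q.nonempty
  obtain ⟨ψ, hψ, himg⟩ := hq.toFinset.exists_strictMonoOn_image_Iio_card hne
  set n := hq.toFinset.card
  rw [Set.Finite.coe_toFinset] at himg
  let c : Code ε := ⟨n, fun u => (⟨min (q.r (u.1.image ψ)) ε, Set.mem_Iic.2 (min_le_right _ _)⟩,
    q.j (u.1.image ψ), q.k (u.1.image ψ))⟩
  have hc (u : Finset ℕ) (hu : u.Nonempty) (hun : ↑u ⊆ Set.Iio n) :
      c.r u = q.r (u.image ψ) ∧ c.j u = q.j (u.image ψ) ∧ c.k u = q.k (u.image ψ) := by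
    simp only [Code.r, Code.j, Code.k, c.val_of_subset hun]
    refine ⟨min_eq_left (q.r_le _ (hu.image ψ) ?_), rfl, rfl⟩
    rw [Finset.coe_image, ← himg]
    exact Set.image_mono hun
  have hqψ : IsYZRSystem ε (ψ '' Set.Iio n) q.r q.j q.k := himg ▸ q.isYZRSystem
  have hX {x : Ordinal.{u}} (hx : x ∈ q.X) : x ∈ ψ '' Set.Iio n := himg ▸ hx
  set ι := Function.invFunOn ψ (Set.Iio n)
  have hι : Set.MapsTo ι q.X (Set.Iio n) := fun x hx => (Function.invFunOn_pos (hX hx)).1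
  have hψι {v : Finset Ordinal.{u}} (hv : ↑v ⊆ q.X) : (v.image ι).image ψ = v := by
    rw [Finset.image_image]
    exact (Finset.image_congr fun x hx => Function.invFunOn_eq (hX (hv hx))).trans
      Finset.image_id
  refine ⟨c, ⟨hne.card_pos, hqψ.comap hψ (fun u hu hun => (hc u hu hun).1)
    (fun u hu hun => (hc u hu hun).2.1) (fun u hu hun => (hc u hu hun).2.2)⟩,
    ι, himg ▸ hψ.strictMonoOn_invFunOn, hι, fun v hv hvX => ?_⟩
  have hvι : ↑(v.image ι) ⊆ Set.Iio n := by
    rw [Finset.coe_image]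
    exact (hι.mono_left hvX).image_subset
  simpa only [hψι hvX] using hc _ (hv.image ι) hvι

end YZRSystem

noncomputable def Ordinal.toNat (o : Ordinal.{u}) : ℕ := Cardinal.toNat o.card

@[simp]
theorem Ordinal.toNat_natCast (n : ℕ) : Ordinal.toNat.{u} n = n := by
  rw [Ordinal.toNat, Ordinal.card_nat, Cardinal.toNat_natCast]

theorem Ordinal.strictMonoOn_toNat : StrictMonoOn Ordinal.toNat.{u} (Set.Iio Ordinal.omega0) := by
  intro x hx y hy hxy
  obtain ⟨n, rfl⟩ := Ordinal.lt_omega0.1 (Set.mem_Iio.1 hx)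
  obtain ⟨m, rfl⟩ := Ordinal.lt_omega0.1 (Set.mem_Iio.1 hy)
  simpa using hxy

theorem Ordinal.toNat_image_Iio_omega0 : Ordinal.toNat.{u} '' Set.Iio Ordinal.omega0 = Set.univ :=
  Set.eq_univ_of_forall fun n => ⟨n, Ordinal.natCast_lt_omega0 n, Ordinal.toNat_natCast n⟩

section CuteSystem

variable {ε : Ordinal.{u}} (g : ℕ → Code ε)

def start (t : ℕ) : ℕ := ∑ i ∈ Finset.range t, (g i).size

noncomputable def blockIdx (m : ℕ) : ℕ := Nat.findGreatest (fun t => start g t ≤ m) m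

def blockR (t : ℕ) (u : Finset ℕ) : Ordinal.{u} := (g t).r (u.image (· - start g t))

def blockJ (t : ℕ) (u : Finset ℕ) : ℕ := (g t).j (u.image (· - start g t))

def blockK (t : ℕ) (u : Finset ℕ) : ℕ := (g t).k (u.image (· - start g t))

def jBound (t : ℕ) : ℕ := (Finset.Ico (start g t) (start g (t + 1))).powerset.sup (blockJ g t)

variable {g}

theorem start_succ (t : ℕ) : start g (t + 1) = start g t + (g t).size :=
  Finset.sum_range_succ _ t

theorem start_mono : Monotone (start g) :=
  monotone_nat_of_le_succ fun t => by rw [start_succ]; exact Nat.le_add_right _ _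

theorem le_start (hg : ∀ t, 0 < (g t).size) (t : ℕ) : t ≤ start g t := by
  induction t with
  | zero => exact le_rfl
  | succ t ih => rw [start_succ]; have := hg t; omega

theorem blockIdx_preimage (hg : ∀ t, 0 < (g t).size) (t : ℕ) :
    blockIdx g ⁻¹' {t} = Set.Ico (start g t) (start g (t + 1)) := by
  ext m
  simp only [Set.mem_preimage, Set.mem_singleton_iff, Set.mem_Ico, blockIdx,
    Nat.findGreatest_eq_iff]
  constructor
  · rintro ⟨-, hP, hmax⟩
    refine ⟨?_, lt_of_not_ge fun hm => hmax (Nat.lt_succ_self t) ?_ hm⟩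
    · rcases Nat.eq_zero_or_pos t with rfl | ht
      · exact Nat.zero_le m
      · exact hP ht.ne'
    · exact (le_start hg _).trans hm
  · rintro ⟨hle, hlt⟩
    exact ⟨(le_start hg t).trans hle, fun _ => hle,
      fun n htn _ hn => (hlt.trans_le (start_mono htn)).not_ge hn⟩

theorem isYZRSystem_block (hg : ∀ t, (g t).Valid) (t : ℕ) :
    IsYZRSystem ε (blockIdx g ⁻¹' {t}) (blockR g t) (blockJ g t) (blockK g t) := by
  rw [blockIdx_preimage fun t => (hg t).1]
  have hsub : StrictMonoOn (· - start g t) (Set.Ico (start g t) (start g (t + 1))) :=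
    fun x hx y hy hxy => by
      simp only [Set.mem_Ico] at hx hy
      show x - start g t < y - start g t
      omega
  have himg : (· - start g t) '' Set.Ico (start g t) (start g (t + 1)) = Set.Iio (g t).size := by
    ext y
    simp only [Set.mem_image, Set.mem_Ico, Set.mem_Iio, start_succ]
    exact ⟨by omega, fun hy => ⟨y + start g t, by omega, by omega⟩⟩
  exact (himg ▸ (hg t).2).comap hsub (fun _ _ _ => rfl) (fun _ _ _ => rfl) (fun _ _ _ => rfl)

theorem blockJ_le_jBound (hg : ∀ t, 0 < (g t).size) (t : ℕ) (u : Finset ℕ)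
    (hu : ↑u ⊆ blockIdx g ⁻¹' {t}) : blockJ g t u ≤ jBound g t := by
  refine Finset.le_sup (Finset.mem_powerset.2 fun m hm => ?_)
  simpa [blockIdx_preimage hg] using hu hm

theorem isYZRSystem_cute (hg : ∀ t, (g t).Valid) :
    IsYZRSystem ε (Set.Iio Ordinal.omega0)
      (fun w => Glue.r (blockIdx g) (blockR g) (w.image Ordinal.toNat))
      (fun w => Glue.j (blockIdx g) (blockR g) (blockJ g) (jBound g) (w.image Ordinal.toNat))
      (fun w => Glue.k (blockIdx g) (blockK g) (w.image Ordinal.toNat)) := by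
  have h := Glue.isYZRSystem (isYZRSystem_block hg) (blockJ_le_jBound fun t => (hg t).1)
  rw [← Ordinal.toNat_image_Iio_omega0] at h
  exact h.comap Ordinal.strictMonoOn_toNat (fun _ _ _ => rfl) (fun _ _ _ => rfl)
    (fun _ _ _ => rfl)

variable (g) in
noncomputable def cuteSystem (hg : ∀ t, (g t).Valid) : YZRSystem ε :=
  YZRSystem.ofIsYZRSystem ⟨0, Ordinal.omega0_pos⟩ (isYZRSystem_cute hg)

theorem quasiEmb_cuteSystem (hg : ∀ t, (g t).Valid) (q : YZRSystem ε) {t : ℕ}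
    {ι : Ordinal.{u} → ℕ} (hι : StrictMonoOn ι q.X) (hmaps : Set.MapsTo ι q.X (Set.Iio (g t).size))
    (hval : ∀ v : Finset Ordinal.{u}, v.Nonempty → ↑v ⊆ q.X →
      (g t).r (v.image ι) = q.r v ∧ (g t).j (v.image ι) = q.j v ∧ (g t).k (v.image ι) = q.k v) :
    QuasiEmb q (cuteSystem g hg) (fun x => ((start g t + ι x : ℕ) : Ordinal.{u})) := by
  refine ⟨fun x hx y hy hxy => ?_, fun x _ => Ordinal.natCast_lt_omega0 _, fun v hne hv => ?_⟩
  · exact Nat.cast_lt.2 (Nat.add_lt_add_left (hι hx hy hxy) _)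
  set u := v.image fun x => start g t + ι x
  have hu : (v.image fun x => ((start g t + ι x : ℕ) : Ordinal.{u})).image Ordinal.toNat = u := by
    rw [Finset.image_image]
    exact Finset.image_congr fun x _ => Ordinal.toNat_natCast _
  have hut : ↑u ⊆ blockIdx g ⁻¹' {t} := by
    rw [blockIdx_preimage fun t => (hg t).1, Finset.coe_image, start_succ]
    rintro _ ⟨x, hx, rfl⟩
    exact ⟨Nat.le_add_right _ _, Nat.add_lt_add_left (hmaps (hv hx)) _⟩
  have hshift : u.image (· - start g t) = v.image ι := by
    rw [Finset.image_image]
    exact Finset.image_congr fun x _ => Nat.add_sub_cancel_left _ _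
  have hune : u.Nonempty := hne.image _
  obtain ⟨hr, hj, hk⟩ := hval v hne hv
  have hR : Glue.r (blockIdx g) (blockR g) u = q.r v := by
    rw [Glue.r_of_subset hune hut, blockR, hshift, hr]
  refine ⟨?_, ?_, fun hpos => ?_⟩
  · show Glue.r _ _ _ = _
    rw [hu, hR]
  · show Glue.k _ _ _ = _
    rw [hu, Glue.k_of_subset hune hut, blockK, hshift, hk]
  · show Glue.j _ _ _ _ _ = _
    rw [hu, Glue.j_of_r_pos (hR ▸ hpos), Glue.blockOf_eq hune hut, blockJ, hshift, hj]

end CuteSystem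

/-- Theorem 3.4: for every `0 < ε < ω₁` there is a cute `YZR(ε)`-system, i.e. one with
universe `ω` into which every finite `YZR(ε)`-system quasi-embeds with range in `[M, ω)`,
for every `M < ω`. -/
theorem stmt_17 (ε : Ordinal) (h0 : 0 < ε) (h1 : ε < (Cardinal.aleph 1).ord) :
    ∃ S : YZRSystem ε, S.X = Set.Iio Ordinal.omega0 ∧
      ∀ q : YZRSystem ε, q.X.Finite → ∀ M : ℕ,
        ∃ φ : Ordinal → Ordinal, QuasiEmb q S φ ∧ ∀ a ∈ q.X, (M : Ordinal) ≤ φ a := by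
  have := Code.countable h1
  obtain ⟨c₀, hc₀⟩ := Code.exists_valid h0
  have : Nonempty {c : Code ε // c.Valid} := ⟨⟨c₀, hc₀⟩⟩
  obtain ⟨f, hf⟩ := exists_surjective_nat {c : Code ε // c.Valid}
  -- every valid code sits in block `Nat.pair i M` for every `M`, hence arbitrarily far out
  let g : ℕ → Code ε := fun t => (f t.unpair.1).1
  have hg : ∀ t, (g t).Valid := fun t => (f t.unpair.1).2
  refine ⟨cuteSystem g hg, rfl, fun q hq M => ?_⟩
  obtain ⟨c, hc, ι, hι, hmaps, hval⟩ := q.exists_code_of_finite hq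
  obtain ⟨i, hi⟩ := hf ⟨c, hc⟩
  have hgc : g (Nat.pair i M) = c := by simp [g, hi]
  subst hgc
  refine ⟨_, quasiEmb_cuteSystem hg q hι hmaps hval, fun a _ => ?_⟩
  exact Nat.cast_le.2 ((Nat.right_le_pair i M).trans
    ((le_start (fun t => (hg t).1) _).trans (Nat.le_add_right _ _)))
end

section
/- Let p ∈ 𝒫_ι (the approximation poset of the main construction) with data (w, n, M, η̄, t̄, d̄, h̄, ḡ, ℳ, ρ̄), where ι ≥ 3. Suppose ν⁰ᵢ, ν¹ᵢ ∈ ⋃_{m<M}(t_m ∩ 2ⁿ) for i < ι satisfy: (a) there are no repetitions in the list ⟨ν⁰ᵢ, ν¹ᵢ : i<ι⟩, and (b) ν⁰ᵢ + ν¹ᵢ = ν⁰ⱼ + ν¹ⱼ for all i < j < ι. Then there exist a, b ∈ w such that {{ν⁰ᵢ, ν¹ᵢ} : i<ι} = {{gᵢ(a,b), gᵢ(b,a)} : i<ι}. -/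
/-!
Write every node as `η_x + ρ_r` with `r = (i, a, b)` and `x ∈ {a, b}`. Since `η̄ ⌢ ρ̄` is
independent over `𝔽₂`, an equation `ν⁰ᵢ + ν¹ᵢ = ν⁰ⱼ + ν¹ⱼ` splits into an `η`-part and a `ρ`-part,
and in each part the four indices cancel in pairs. If `ν⁰ᵢ, ν¹ᵢ` had different `ρ`-indices, all
`2ι ≥ 6` nodes would lie over these two indices, which carry only four nodes. So `ν⁰ᵢ, ν¹ᵢ` share a
`ρ`-index `(kᵢ, aᵢ, bᵢ)`, their `η`-indices are `aᵢ ≠ bᵢ`, and the `η`-part forces `{aᵢ, bᵢ}` to be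
one pair `{a, b}` for all `i`; distinctness of the nodes makes `i ↦ kᵢ` a permutation of `ι`.
-/

open Function

section PairSums

variable {R M ι κ : Type*}

theorem LinearIndependent.eq_and_eq_of_add_eq_add [Ring R] [AddCommGroup M] [Module R M]
    {u : ι → M} {v : κ → M} (hli : LinearIndependent R (Sum.elim u v)) {x x' y y' : M}
    (hx : x ∈ Submodule.span R (Set.range u)) (hx' : x' ∈ Submodule.span R (Set.range u))
    (hy : y ∈ Submodule.span R (Set.range v)) (hy' : y' ∈ Submodule.span R (Set.range v))
    (h : x + y = x' + y') : x = x' ∧ y = y' := by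
  obtain ⟨-, -, hdisj⟩ := linearIndependent_sum.mp hli
  simp only [Sum.elim_comp_inl, Sum.elim_comp_inr] at hdisj
  have hxy : x - x' = y' - y := by rw [sub_eq_sub_iff_add_eq_add, h, add_comm]
  have hx0 : x - x' = 0 :=
    Submodule.disjoint_def.mp hdisj _ (sub_mem hx hx') (hxy ▸ sub_mem hy' hy)
  exact ⟨sub_eq_zero.mp hx0, (sub_eq_zero.mp (hxy.symm.trans hx0)).symm⟩

variable [AddCommGroup M] [Module (ZMod 2) M]

theorem LinearIndependent.eq_or_sym2_eq_of_add_eq_add {u : ι → M}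
    (hli : LinearIndependent (ZMod 2) u) {a b c d : ι} (h : u a + u b = u c + u d) :
    a = b ∧ c = d ∨ s(a, b) = s(c, d) := by
  have hsingle : Finsupp.single a (1 : ZMod 2) + Finsupp.single b 1 =
      Finsupp.single c 1 + Finsupp.single d 1 :=
    hli.finsuppLinearCombination_injective (by simpa using h)
  rw [Finsupp.single_add_single_eq_single_add_single one_ne_zero one_ne_zero] at hsingle
  rw [Sym2.eq_iff]
  tauto

theorem LinearIndependent.pairings_of_sumElim {u : ι → M} {v : κ → M}
    (hli : LinearIndependent (ZMod 2) (Sum.elim u v)) {x₁ x₂ x₃ x₄ : ι} {r₁ r₂ r₃ r₄ : κ}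
    (h : u x₁ + v r₁ + (u x₂ + v r₂) = u x₃ + v r₃ + (u x₄ + v r₄)) :
    (x₁ = x₂ ∧ x₃ = x₄ ∨ s(x₁, x₂) = s(x₃, x₄)) ∧
      (r₁ = r₂ ∧ r₃ = r₄ ∨ s(r₁, r₂) = s(r₃, r₄)) := by
  obtain ⟨hu, hv, -⟩ := linearIndependent_sum.mp hli
  simp only [Sum.elim_comp_inl, Sum.elim_comp_inr] at hu hv
  have memu (s t : ι) : u s + u t ∈ Submodule.span (ZMod 2) (Set.range u) :=
    add_mem (Submodule.subset_span ⟨s, rfl⟩) (Submodule.subset_span ⟨t, rfl⟩)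
  have memv (s t : κ) : v s + v t ∈ Submodule.span (ZMod 2) (Set.range v) :=
    add_mem (Submodule.subset_span ⟨s, rfl⟩) (Submodule.subset_span ⟨t, rfl⟩)
  obtain ⟨hx, hr⟩ := hli.eq_and_eq_of_add_eq_add (memu x₁ x₂) (memu x₃ x₄) (memv r₁ r₂)
    (memv r₃ r₄) (by rw [add_add_add_comm, h, add_add_add_comm])
  exact ⟨hu.eq_or_sym2_eq_of_add_eq_add hx, hv.eq_or_sym2_eq_of_add_eq_add hr⟩

end PairSums

section Nodes

variable {M ι κ : Type*} [AddCommGroup M] [Module (ZMod 2) M] {u : ι → M} {v : κ → M}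
  {ends : κ → Bool → ι} {k : ℕ} {ν₀ ν₁ : Fin k → M} {S₀ S₁ : Fin k → κ} {s₀ s₁ : Fin k → Bool}

theorem Bool.sym2_mk_eq_of_ne {α : Type*} (f : Bool → α) {b c : Bool} (h : b ≠ c) :
    s(f b, f c) = s(f false, f true) := by
  cases b <;> cases c <;> simp_all [Sym2.eq_swap]

variable (hli : LinearIndependent (ZMod 2) (Sum.elim u v))
  (hν₀ : ∀ i, ν₀ i = u (ends (S₀ i) (s₀ i)) + v (S₀ i))
  (hν₁ : ∀ i, ν₁ i = u (ends (S₁ i) (s₁ i)) + v (S₁ i))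
  (hsum : ∀ i j, ν₀ i + ν₁ i = ν₀ j + ν₁ j)
include hli hν₀ hν₁ hsum

theorem index_eq_of_sums_eq (hk : 3 ≤ k) (hinj : Injective (Sum.elim ν₀ ν₁)) (i : Fin k) :
    S₀ i = S₁ i := by
  classical
  by_contra hne
  have hS (j : Fin k) : S₀ j ∈ ({S₀ i, S₁ i} : Finset κ) ∧ S₁ j ∈ ({S₀ i, S₁ i} : Finset κ) := by
    have h := hsum i j
    simp only [hν₀, hν₁] at h
    rcases (hli.pairings_of_sumElim h).2 with h | h
    · exact absurd h.1 hne
    · rcases Sym2.eq_iff.1 h with ⟨h₀, h₁⟩ | ⟨h₀, h₁⟩ <;> simp [h₀, h₁]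
  let nodes := (({S₀ i, S₁ i} : Finset κ) ×ˢ Finset.univ).image
    fun p : κ × Bool => u (ends p.1 p.2) + v p.1
  have hmaps : Set.MapsTo (Sum.elim ν₀ ν₁) (Finset.univ : Finset (Fin k ⊕ Fin k)) nodes := by
    rintro (j | j) -
    · exact Finset.mem_image.2 ⟨(S₀ j, s₀ j), by simp [(hS j).1], (hν₀ j).symm⟩
    · exact Finset.mem_image.2 ⟨(S₁ j, s₁ j), by simp [(hS j).2], (hν₁ j).symm⟩
  have hcard : nodes.card ≤ 4 := Finset.card_image_le.trans <| by
    rw [Finset.card_product, Finset.card_univ, Fintype.card_bool]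
    exact Nat.mul_le_mul_right 2 Finset.card_le_two
  have := Finset.card_le_card_of_injOn _ hmaps hinj.injOn
  simp only [Finset.card_univ, Fintype.card_sum, Fintype.card_fin] at this
  omega

theorem exists_injective_index_of_sums_eq (hk : 3 ≤ k) (hinj : Injective (Sum.elim ν₀ ν₁)) :
    ∃ S : Fin k → κ, Injective S ∧
      (∀ i, ({ν₀ i, ν₁ i} : Set M) =
        {u (ends (S i) false) + v (S i), u (ends (S i) true) + v (S i)}) ∧
      ∀ i j, s(ends (S i) false, ends (S i) true) = s(ends (S j) false, ends (S j) true) := by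
  have hS := index_eq_of_sums_eq hli hν₀ hν₁ hsum hk hinj
  have hne (i : Fin k) : ν₀ i ≠ ν₁ i := fun h => Sum.inl_ne_inr (hinj h)
  have hs (i : Fin k) : s₀ i ≠ s₁ i := fun h => hne i (by rw [hν₀, hν₁, hS, h])
  have hpair (i : Fin k) : ({ν₀ i, ν₁ i} : Set M) =
      {u (ends (S₀ i) false) + v (S₀ i), u (ends (S₀ i) true) + v (S₀ i)} := by
    rw [Set.pair_eq_pair_iff, ← Sym2.eq_iff, hν₀, hν₁, ← hS]
    exact Bool.sym2_mk_eq_of_ne (fun b => u (ends (S₀ i) b) + v (S₀ i)) (hs i)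
  refine ⟨S₀, fun i j h => ?_, hpair, fun i j => ?_⟩
  · have hmem : ν₀ i ∈ ({ν₀ j, ν₁ j} : Set M) := by rw [hpair, ← h, ← hpair]; exact Or.inl rfl
    obtain h | h : ν₀ i = ν₀ j ∨ ν₀ i = ν₁ j := hmem
    · exact Sum.inl_injective (hinj h)
    · exact (Sum.inl_ne_inr (hinj h)).elim
  · have h := hsum i j
    simp only [hν₀, hν₁, ← hS] at h
    rcases (hli.pairings_of_sumElim h).1 with h | h
    · exact absurd (by rw [hν₀, hν₁, ← hS, h.1]) (hne i)
    · rwa [Bool.sym2_mk_eq_of_ne (ends (S₀ i)) (hs i),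
        Bool.sym2_mk_eq_of_ne (ends (S₀ j)) (hs j)] at h

end Nodes

abbrev PairIndex (iota : ℕ) (w : Finset ℕ) : Type :=
  {p : ℕ × ℕ × ℕ // p.1 < iota ∧ p.2.1 ∈ w ∧ p.2.2 ∈ w ∧ p.2.1 < p.2.2}

namespace PairIndex

variable {iota : ℕ} {w : Finset ℕ}

def endpoint (r : PairIndex iota w) (b : Bool) : w :=
  bif b then ⟨r.1.2.2, r.2.2.2.1⟩ else ⟨r.1.2.1, r.2.2.1⟩

theorem snd_eq_of_sym2_eq {r r' : PairIndex iota w}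
    (h : s(r.endpoint false, r.endpoint true) = s(r'.endpoint false, r'.endpoint true)) :
    r.1.2 = r'.1.2 := by
  have hr := r.2.2.2.2
  have hr' := r'.2.2.2.2
  simp only [endpoint, cond_false, cond_true, Sym2.eq_iff, Subtype.mk.injEq] at h
  ext <;> omega

variable {V : Type*} [Add V] {η : ℕ → V} {ρ g : ℕ → ℕ → ℕ → V}
  (hg : ∀ i a b, a ∈ w → b ∈ w → a < b → g i a b = η a + ρ i a b ∧ g i b a = η b + ρ i a b)
include hg

theorem exists_eq_of_eq_g {ξ : V} (hξ : ∃ i < iota, ∃ a ∈ w, ∃ b ∈ w, a ≠ b ∧ ξ = g i a b) :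
    ∃ (r : PairIndex iota w) (s : Bool), ξ = η (r.endpoint s) + ρ r.1.1 r.1.2.1 r.1.2.2 := by
  obtain ⟨i, hi, a, ha, b, hb, hab, rfl⟩ := hξ
  rcases hab.lt_or_gt with hab | hab
  · exact ⟨⟨(i, a, b), hi, ha, hb, hab⟩, false, (hg i a b ha hb hab).1⟩
  · exact ⟨⟨(i, b, a), hi, hb, ha, hab⟩, true, (hg i b a hb ha hab).2⟩

theorem pair_eq_g (r : PairIndex iota w) :
    ({η (r.endpoint false) + ρ r.1.1 r.1.2.1 r.1.2.2,
        η (r.endpoint true) + ρ r.1.1 r.1.2.1 r.1.2.2} : Set V) =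
      {g r.1.1 r.1.2.1 r.1.2.2, g r.1.1 r.1.2.2 r.1.2.1} := by
  obtain ⟨hfalse, htrue⟩ := hg r.1.1 _ _ r.2.2.1 r.2.2.2.1 r.2.2.2.2
  rw [hfalse, htrue]
  rfl

end PairIndex

theorem stmt_18_general (n M iota : ℕ) (hiota : 3 ≤ iota)
    (w : Finset ℕ)
    (η : ℕ → (Fin n → ZMod 2))
    (ρ : ℕ → ℕ → ℕ → (Fin n → ZMod 2))
    (hli : LinearIndependent (ZMod 2)
      (Sum.elim (fun a : {a : ℕ // a ∈ w} => η a.1)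
        (fun p : {p : ℕ × ℕ × ℕ // p.1 < iota ∧ p.2.1 ∈ w ∧ p.2.2 ∈ w ∧ p.2.1 < p.2.2} =>
          ρ p.1.1 p.1.2.1 p.1.2.2)))
    (g : ℕ → ℕ → ℕ → (Fin n → ZMod 2))
    (hg : ∀ i a b, a ∈ w → b ∈ w → a < b →
      g i a b = η a + ρ i a b ∧ g i b a = η b + ρ i a b)
    (t : Fin M → Set (Fin n → ZMod 2))
    (ht_sub : ∀ m, t m ⊆ {x | ∃ i < iota, ∃ a ∈ w, ∃ b ∈ w, a ≠ b ∧ x = g i a b})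
    (ν0 ν1 : Fin iota → (Fin n → ZMod 2))
    (hmem : ∀ i, (∃ m, ν0 i ∈ t m) ∧ (∃ m, ν1 i ∈ t m))
    (hnodup : ∀ i j, (ν0 i = ν0 j → i = j) ∧ (ν1 i = ν1 j → i = j) ∧ ν0 i ≠ ν1 j)
    (hsum : ∀ i j, ν0 i + ν1 i = ν0 j + ν1 j) :
    ∃ a ∈ w, ∃ b ∈ w, a ≠ b ∧
      (Set.range fun i : Fin iota => ({ν0 i, ν1 i} : Set (Fin n → ZMod 2))) =
      (Set.range fun i : Fin iota => ({g i.1 a b, g i.1 b a} : Set (Fin n → ZMod 2))) := by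
  have hinj : Injective (Sum.elim ν0 ν1) := .sumElim (fun i j h => (hnodup i j).1 h)
    (fun i j h => (hnodup i j).2.1 h) fun i j => (hnodup i j).2.2
  have hrep (ξ) (hξ : ∃ m, ξ ∈ t m) := PairIndex.exists_eq_of_eq_g hg (ht_sub _ hξ.choose_spec)
  choose S₀ s₀ hν₀ using fun i => hrep _ (hmem i).1
  choose S₁ s₁ hν₁ using fun i => hrep _ (hmem i).2
  obtain ⟨S, hSinj, hpair, hends⟩ := exists_injective_index_of_sums_eq hli hν₀ hν₁ hsum hiota hinj
  let i₀ : Fin iota := ⟨0, by omega⟩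
  have hS (j : Fin iota) : (S j).1.2 = (S i₀).1.2 := PairIndex.snd_eq_of_sym2_eq (hends j i₀)
  refine ⟨_, (S i₀).2.2.1, _, (S i₀).2.2.2.1, (S i₀).2.2.2.2.ne, ?_⟩
  let κ (j : Fin iota) : Fin iota := ⟨(S j).1.1, (S j).2.1⟩
  have hκ : Injective κ := fun i j h =>
    hSinj (Subtype.ext (Prod.ext (congrArg Fin.val h) ((hS i).trans (hS j).symm)))
  symm
  rw [← (Finite.injective_iff_bijective.1 hκ).2.range_comp]
  refine congrArg Set.range (funext fun j => ?_)
  rw [comp_apply, hpair j, PairIndex.pair_eq_g hg, hS j]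

/-- Claim 5.7(A): in a condition of the approximation poset `𝒫_ι` with `ι ≥ 3`, any sequence
`⟨ν⁰ᵢ, ν¹ᵢ : i < ι⟩` of pairwise distinct nodes from `⋃_{m<M}(t_m ∩ 2ⁿ)` with all sums
`ν⁰ᵢ + ν¹ᵢ` equal comes, as a set of unordered pairs, from a single pair `a, b ∈ w`:
`{{ν⁰ᵢ, ν¹ᵢ} : i<ι} = {{gᵢ(a,b), gᵢ(b,a)} : i<ι}`. -/
theorem stmt_18 (n M iota : ℕ) (hn : 0 < n) (hiota : 3 ≤ iota)
    (w : Finset ℕ)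
    (η : ℕ → (Fin n → ZMod 2))
    (ρ : ℕ → ℕ → ℕ → (Fin n → ZMod 2))
    (hli : LinearIndependent (ZMod 2)
      (Sum.elim (fun a : {a : ℕ // a ∈ w} => η a.1)
        (fun p : {p : ℕ × ℕ × ℕ // p.1 < iota ∧ p.2.1 ∈ w ∧ p.2.2 ∈ w ∧ p.2.1 < p.2.2} =>
          ρ p.1.1 p.1.2.1 p.1.2.2)))
    (g : ℕ → ℕ → ℕ → (Fin n → ZMod 2))
    (hg : ∀ i a b, a ∈ w → b ∈ w → a < b →
      g i a b = η a + ρ i a b ∧ g i b a = η b + ρ i a b)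
    (t : Fin M → Set (Fin n → ZMod 2))
    (ht_sub : ∀ m, t m ⊆ {x | ∃ i < iota, ∃ a ∈ w, ∃ b ∈ w, a ≠ b ∧ x = g i a b})
    (ht_disj : ∀ m m' : Fin M, m ≠ m' → t m ∩ t m' = ∅)
    (ν0 ν1 : Fin iota → (Fin n → ZMod 2))
    (hmem : ∀ i, (∃ m, ν0 i ∈ t m) ∧ (∃ m, ν1 i ∈ t m))
    (hnodup : ∀ i j, (ν0 i = ν0 j → i = j) ∧ (ν1 i = ν1 j → i = j) ∧ ν0 i ≠ ν1 j)
    (hsum : ∀ i j, ν0 i + ν1 i = ν0 j + ν1 j) :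
    ∃ a ∈ w, ∃ b ∈ w, a ≠ b ∧
      (Set.range fun i : Fin iota => ({ν0 i, ν1 i} : Set (Fin n → ZMod 2))) =
      (Set.range fun i : Fin iota => ({g i.1 a b, g i.1 b a} : Set (Fin n → ZMod 2))) :=
  stmt_18_general n M iota hiota w η ρ hli g hg t ht_sub ν0 ν1 hmem hnodup hsum
end
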